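/- arXiv:1807.01878 — 11 statements merged into one kernel-verified Lean document; each statement's English description precedes it below -/
import Mathlib

section
/- The derivative ∂₂f(y, y₀) is nonzero for every y ∈ I, so the function g : I → ℝ defined by g(y) := ∫_{y₀}^{y} (∂₂f(t, y₀))⁻¹ dt is well defined; moreover g is a C^k-diffeomorphism from I onto all of ℝ and a group isomorphism from (I, ⋆) onto (ℝ, +), i.e. g(f(y, z)) = g(y) + g(z) for all y, z ∈ I. -/
/-!
The left translation `f y` has the inverse `f (inv y)`, so its derivative at `y₀` cannot vanish.
Differentiating `f y (f z x) = f (f y z) x` at `x = y₀` gives the cocycle identity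
`∂₂f(y, z) · ∂₂f(z, y₀) = ∂₂f(f y z, y₀)`, which says exactly that `z ↦ g (f y z)` and
`z ↦ g y + g z` have the same derivative; as they agree at `z = y₀`, `g` is a homomorphism.
Since `g' = 1 / ∂₂f(·, y₀)` never vanishes, `g` is injective and, by the inverse function theorem,
open with a `C^k` inverse. Its image is then an open subgroup of `ℝ`, hence closed, hence all of `ℝ`.
-/

open MeasureTheory intervalIntegral Set Function Filter Topology

lemma differentiableAt_of_contDiffOn_uncurry {f : ℝ → ℝ → ℝ} {s t : Set ℝ} {n : WithTop ℕ∞}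
    (hf : ContDiffOn ℝ n (uncurry f) (s ×ˢ t)) (hn : n ≠ 0) (ht : IsOpen t) {y x : ℝ}
    (hy : y ∈ s) (hx : x ∈ t) : DifferentiableAt ℝ (f y) x :=
  have hslice : ContDiffOn ℝ n (f y) t :=
    hf.comp (contDiff_const.prodMk contDiff_id).contDiffOn fun _ hx' => ⟨hy, hx'⟩
  (hslice.contDiffAt (ht.mem_nhds hx)).differentiableAt hn

lemma contDiffOn_deriv_of_contDiffOn_uncurry {f : ℝ → ℝ → ℝ} {s t : Set ℝ} {m n : WithTop ℕ∞}
    (hf : ContDiffOn ℝ n (uncurry f) (s ×ˢ t)) (hmn : m + 1 ≤ n) (hs : IsOpen s) (ht : IsOpen t)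
    {x : ℝ} (hx : x ∈ t) : ContDiffOn ℝ m (fun y => deriv (f y) x) s := by
  have hdf : ContDiffOn ℝ m (fun y => fderiv ℝ (uncurry f) (y, x) (0, 1)) s :=
    ((ContinuousLinearMap.apply ℝ ℝ ((0 : ℝ), (1 : ℝ))).contDiff.comp_contDiffOn
      ((hf.fderiv_of_isOpen (hs.prod ht) hmn).comp
        (contDiff_id.prodMk contDiff_const).contDiffOn fun _ hy => ⟨hy, hx⟩))
  refine hdf.congr fun y hy => ?_
  have hF : DifferentiableAt ℝ (uncurry f) (y, x) :=
    (hf.contDiffAt ((hs.prod ht).mem_nhds ⟨hy, hx⟩)).differentiableAt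
      (ne_of_gt (lt_of_lt_of_le (by simp) hmn))
  exact (hF.hasFDerivAt.comp_hasDerivAt x
    ((hasDerivAt_const x y).prodMk (hasDerivAt_id x))).deriv

section Primitive

variable {E : Type*} [NormedAddCommGroup E] [NormedSpace ℝ E] [CompleteSpace E]
  {φ : ℝ → E} {I : Set ℝ} {a : ℝ}

lemma hasDerivAt_integral_of_continuousOn (hI : IsOpen I) (hIc : I.OrdConnected)
    (hφ : ContinuousOn φ I) (ha : a ∈ I) {y : ℝ} (hy : y ∈ I) :
    HasDerivAt (fun y => ∫ t in a..y, φ t) (φ y) y :=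
  integral_hasDerivAt_right ((hφ.mono (hIc.uIcc_subset ha hy)).intervalIntegrable)
    (hφ.stronglyMeasurableAtFilter hI y hy)
    (hφ.continuousAt (hI.mem_nhds hy))

lemma contDiffOn_integral {n : ℕ∞} (hI : IsOpen I) (hIc : I.OrdConnected)
    (hφ : ContDiffOn ℝ n φ I) (ha : a ∈ I) :
    ContDiffOn ℝ (n + 1) (fun y => ∫ t in a..y, φ t) I := by
  have hderiv := fun y (hy : y ∈ I) =>
    hasDerivAt_integral_of_continuousOn hI hIc hφ.continuousOn ha hy
  rw [contDiffOn_succ_iff_deriv_of_isOpen hI]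
  refine ⟨fun y hy => (hderiv y hy).differentiableAt.differentiableWithinAt, by simp, ?_⟩
  exact hφ.congr fun y hy => (hderiv y hy).deriv

end Primitive

lemma Convex.injOn_of_hasDerivAt_ne_zero {g g' : ℝ → ℝ} {I : Set ℝ} (hI : Convex ℝ I)
    (hg : ∀ x ∈ I, HasDerivAt g (g' x) x) (hg' : ∀ x ∈ I, g' x ≠ 0) : InjOn g I := by
  have hcont : ContinuousOn g I := fun x hx => (hg x hx).continuousAt.continuousWithinAt
  have hint : ∀ x ∈ interior I, HasDerivWithinAt g (g' x) (interior I) x :=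
    fun x hx => (hg x (interior_subset hx)).hasDerivWithinAt
  rcases hasDerivWithinAt_forall_lt_or_forall_gt_of_forall_ne hI
    (fun x hx => (hg x hx).hasDerivWithinAt) hg' with hneg | hpos
  · exact (strictAntiOn_of_hasDerivWithinAt_neg hI hcont hint
      fun x hx => hneg x (interior_subset hx)).injOn
  · exact (strictMonoOn_of_hasDerivWithinAt_pos hI hcont hint
      fun x hx => hpos x (interior_subset hx)).injOn

lemma AddSubgroup.coe_eq_univ_of_isOpen {G : Type*} [AddGroup G] [TopologicalSpace G]
    [SeparatelyContinuousAdd G] [ConnectedSpace G] (H : AddSubgroup G) (hH : IsOpen (H : Set G)) :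
    (H : Set G) = univ :=
  IsClopen.eq_univ ⟨H.isClosed_of_isOpen hH, hH⟩ ⟨0, H.zero_mem⟩

section GroupLaw

variable {I : Set ℝ} {f : ℝ → ℝ → ℝ} {y₀ : ℝ} {inv : ℝ → ℝ}

lemma deriv_left_translation_ne_zero (hI : IsOpen I) (hy₀ : y₀ ∈ I)
    (hassoc : ∀ a ∈ I, ∀ b ∈ I, ∀ c ∈ I, f (f a b) c = f a (f b c))
    (hone_mul : ∀ a ∈ I, f y₀ a = a)
    (hinv_mem : ∀ a ∈ I, inv a ∈ I)
    (hmul_inv : ∀ a ∈ I, f a (inv a) = y₀)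
    (hinv_mul : ∀ a ∈ I, f (inv a) a = y₀)
    (hdiff : ∀ y ∈ I, ∀ x ∈ I, DifferentiableAt ℝ (f y) x) {y : ℝ} (hy : y ∈ I) :
    deriv (f y) y₀ ≠ 0 := by
  intro h0
  have hleft : f y ∘ f (inv y) =ᶠ[𝓝 y] id := by
    filter_upwards [hI.mem_nhds hy] with x hx
    rw [comp_apply, ← hassoc y hy (inv y) (hinv_mem y hy) x hx, hmul_inv y hy, hone_mul x hx, id]
  have hzero : HasDerivAt (f y) 0 (f (inv y) y) := by
    rw [hinv_mul y hy, ← h0]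
    exact (hdiff y hy y₀ hy₀).hasDerivAt
  exact not_differentiableAt_of_local_left_inverse_hasDerivAt_zero hzero hleft
    (hdiff _ (hinv_mem y hy) y hy)

lemma deriv_left_translation_mul (hI : IsOpen I) (hy₀ : y₀ ∈ I)
    (hassoc : ∀ a ∈ I, ∀ b ∈ I, ∀ c ∈ I, f (f a b) c = f a (f b c))
    (hmul_one : ∀ a ∈ I, f a y₀ = a)
    (hdiff : ∀ y ∈ I, ∀ x ∈ I, DifferentiableAt ℝ (f y) x) {y z : ℝ} (hy : y ∈ I) (hz : z ∈ I) :
    deriv (f y) z * deriv (f z) y₀ = deriv (f (f y z)) y₀ := by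
  have hy' : HasDerivAt (f y) (deriv (f y) z) (f z y₀) := by
    rw [hmul_one z hz]
    exact (hdiff y hy z hz).hasDerivAt
  refine ((hy'.comp y₀ (hdiff z hz y₀ hy₀).hasDerivAt).congr_of_eventuallyEq ?_).deriv.symm
  filter_upwards [hI.mem_nhds hy₀] with x hx using hassoc y hy z hz x hx

lemma map_mul_of_hasDerivAt_inv_deriv {g : ℝ → ℝ} (hI : IsOpen I) (hIc : IsPreconnected I)
    (hy₀ : y₀ ∈ I)
    (hmul : ∀ a ∈ I, ∀ b ∈ I, f a b ∈ I)
    (hassoc : ∀ a ∈ I, ∀ b ∈ I, ∀ c ∈ I, f (f a b) c = f a (f b c))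
    (hmul_one : ∀ a ∈ I, f a y₀ = a)
    (hdiff : ∀ y ∈ I, ∀ x ∈ I, DifferentiableAt ℝ (f y) x)
    (hne : ∀ x ∈ I, deriv (f x) y₀ ≠ 0) (hg : ∀ x ∈ I, HasDerivAt g (deriv (f x) y₀)⁻¹ x)
    (hg₀ : g y₀ = 0) {y z : ℝ} (hy : y ∈ I) (hz : z ∈ I) :
    g (f y z) = g y + g z := by
  have hcomp : ∀ w ∈ I, HasDerivAt (fun w => g (f y w)) (deriv (f w) y₀)⁻¹ w := by
    intro w hw
    have hcocycle := deriv_left_translation_mul hI hy₀ hassoc hmul_one hdiff hy hw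
    have hD : deriv (f y) w ≠ 0 :=
      left_ne_zero_of_mul (hcocycle ▸ hne _ (hmul y hy w hw))
    have hchain : (deriv (f (f y w)) y₀)⁻¹ * deriv (f y) w = (deriv (f w) y₀)⁻¹ := by
      rw [← hcocycle, mul_inv_rev, mul_assoc, inv_mul_cancel₀ hD, mul_one]
    exact hchain ▸ (hg _ (hmul y hy w hw)).comp w (hdiff y hy w hw).hasDerivAt
  have hshift : ∀ w ∈ I, HasDerivAt (fun w => g y + g w) (deriv (f w) y₀)⁻¹ w :=
    fun w hw => (hg w hw).const_add (g y)
  refine hI.eqOn_of_deriv_eq hIc (fun w hw => (hcomp w hw).differentiableAt.differentiableWithinAt)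
    (fun w hw => (hshift w hw).differentiableAt.differentiableWithinAt)
    (fun w hw => (hcomp w hw).deriv.trans (hshift w hw).deriv.symm) hy₀ ?_ hz
  simp only [hmul_one y hy, hg₀, add_zero]

lemma image_eq_univ_of_map_mul {g : ℝ → ℝ} (hopen : IsOpen (g '' I)) (hy₀ : y₀ ∈ I)
    (hmul : ∀ a ∈ I, ∀ b ∈ I, f a b ∈ I)
    (hinv_mem : ∀ a ∈ I, inv a ∈ I)
    (hmul_inv : ∀ a ∈ I, f a (inv a) = y₀)
    (hg₀ : g y₀ = 0) (hg : ∀ y ∈ I, ∀ z ∈ I, g (f y z) = g y + g z) : g '' I = univ :=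
  let S : AddSubgroup ℝ :=
    { carrier := g '' I
      zero_mem' := ⟨y₀, hy₀, hg₀⟩
      add_mem' := by
        rintro _ _ ⟨y, hy, rfl⟩ ⟨z, hz, rfl⟩
        exact ⟨f y z, hmul y hy z hz, hg y hy z hz⟩
      neg_mem' := by
        rintro _ ⟨y, hy, rfl⟩
        refine ⟨inv y, hinv_mem y hy, eq_neg_of_add_eq_zero_right ?_⟩
        rw [← hg y hy _ (hinv_mem y hy), hmul_inv y hy, hg₀] }
  S.coe_eq_univ_of_isOpen hopen

end GroupLaw

lemma isOpen_image_of_hasStrictDerivAt {g g' : ℝ → ℝ} {I : Set ℝ} (hI : IsOpen I)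
    (hg : ∀ x ∈ I, HasStrictDerivAt g (g' x) x) (hg' : ∀ x ∈ I, g' x ≠ 0) : IsOpen (g '' I) := by
  rw [isOpen_iff_mem_nhds]
  rintro _ ⟨y, hy, rfl⟩
  rw [← (hg y hy).map_nhds_eq (hg' y hy)]
  exact image_mem_map (hI.mem_nhds hy)

lemma ContDiffAt.contDiffAt_of_rightInverse {n : WithTop ℕ∞} {g ginv : ℝ → ℝ} {s : Set ℝ}
    {y g' : ℝ} (hg : ContDiffAt ℝ n g y) (hg' : HasDerivAt g g' y) (hg'₀ : g' ≠ 0) (hn : n ≠ 0)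
    (hs : s ∈ 𝓝 y) (hinj : InjOn g s) (hmaps : ∀ x, ginv x ∈ s) (hright : ∀ x, g (ginv x) = x) :
    ContDiffAt ℝ n ginv (g y) := by
  have hfd := hg'.hasFDerivAt_equiv hg'₀
  have hstrict := hg.hasStrictFDerivAt' hfd hn
  have hloc : ∀ᶠ x in 𝓝 (g y), hstrict.localInverse g _ y x ∈ s :=
    hstrict.localInverse_continuousAt.eventually_mem (by rwa [hstrict.localInverse_apply_image])
  refine (hg.to_localInverse hfd hn).congr_of_eventuallyEq ?_
  filter_upwards [hstrict.eventually_right_inverse, hloc] with x hx hxs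
  exact hinj (hmaps x) hxs ((hright x).trans hx.symm)

lemma exists_contDiff_inverse {n : WithTop ℕ∞} {g g' : ℝ → ℝ} {I : Set ℝ} (hn : n ≠ 0)
    (hI : IsOpen I) (hg : ContDiffOn ℝ n g I) (hg' : ∀ x ∈ I, HasDerivAt g (g' x) x)
    (hg'₀ : ∀ x ∈ I, g' x ≠ 0) (hinj : InjOn g I) (hsurj : SurjOn g I univ) :
    ∃ ginv : ℝ → ℝ, ContDiff ℝ n ginv ∧ (∀ x, ginv x ∈ I) ∧ (∀ y ∈ I, ginv (g y) = y) ∧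
      (∀ x, g (ginv x) = x) := by
  have hmaps : ∀ x, invFunOn g I x ∈ I := fun x => invFunOn_mem (hsurj (mem_univ x))
  have hright : ∀ x, g (invFunOn g I x) = x := fun x => invFunOn_eq (hsurj (mem_univ x))
  refine ⟨invFunOn g I, contDiff_iff_contDiffAt.2 fun x => ?_, hmaps,
    fun y hy => hinj.leftInvOn_invFunOn hy, hright⟩
  obtain ⟨y, hy, rfl⟩ := hsurj (mem_univ x)
  exact (hg.contDiffAt (hI.mem_nhds hy)).contDiffAt_of_rightInverse (hg' y hy) (hg'₀ y hy) hn
    (hI.mem_nhds hy) hinj hmaps hright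

theorem stmt_1_general
    (k : ℕ) (hk : 1 ≤ k)
    (I : Set ℝ) (hIopen : IsOpen I) (hIconn : I.OrdConnected)
    (f : ℝ → ℝ → ℝ) (y₀ : ℝ) (hy₀ : y₀ ∈ I)
    (hmul : ∀ a ∈ I, ∀ b ∈ I, f a b ∈ I)
    (hassoc : ∀ a ∈ I, ∀ b ∈ I, ∀ c ∈ I, f (f a b) c = f a (f b c))
    (hone_mul : ∀ a ∈ I, f y₀ a = a)
    (hmul_one : ∀ a ∈ I, f a y₀ = a)
    (inv : ℝ → ℝ)
    (hinv_mem : ∀ a ∈ I, inv a ∈ I)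
    (hmul_inv : ∀ a ∈ I, f a (inv a) = y₀)
    (hinv_mul : ∀ a ∈ I, f (inv a) a = y₀)
    (hf_smooth : ContDiffOn ℝ k (fun p : ℝ × ℝ => f p.1 p.2) (I ×ˢ I)) :
    (∀ y ∈ I, deriv (fun x => f y x) y₀ ≠ 0) ∧
    (let g : ℝ → ℝ := fun y => ∫ t in y₀..y, (deriv (fun x => f t x) y₀)⁻¹
     ContDiffOn ℝ k g I ∧
     Set.BijOn g I Set.univ ∧
     (∃ ginv : ℝ → ℝ, ContDiff ℝ k ginv ∧ (∀ x : ℝ, ginv x ∈ I) ∧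
        (∀ y ∈ I, ginv (g y) = y) ∧ (∀ x : ℝ, g (ginv x) = x)) ∧
     (∀ y ∈ I, ∀ z ∈ I, g (f y z) = g y + g z)) := by
  obtain ⟨m, rfl⟩ : ∃ m : ℕ, k = m + 1 := ⟨k - 1, by omega⟩
  have hk₀ : ((m + 1 : ℕ) : WithTop ℕ∞) ≠ 0 := by exact_mod_cast m.succ_ne_zero
  have hdiff : ∀ y ∈ I, ∀ x ∈ I, DifferentiableAt ℝ (f y) x := fun y hy x hx =>
    differentiableAt_of_contDiffOn_uncurry hf_smooth hk₀ hIopen hy hx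
  have hne : ∀ y ∈ I, deriv (f y) y₀ ≠ 0 := fun y hy =>
    deriv_left_translation_ne_zero hIopen hy₀ hassoc hone_mul hinv_mem hmul_inv hinv_mul hdiff hy
  refine ⟨hne, ?_⟩
  intro g
  have hinv_deriv : ContDiffOn ℝ m (fun t => (deriv (f t) y₀)⁻¹) I :=
    (contDiffOn_deriv_of_contDiffOn_uncurry hf_smooth (by push_cast; rfl) hIopen hIopen
      hy₀).inv hne
  have hg_smooth : ContDiffOn ℝ (m + 1 : ℕ) g I := by
    exact_mod_cast contDiffOn_integral hIopen hIconn hinv_deriv hy₀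
  have hg' : ∀ y ∈ I, HasDerivAt g (deriv (f y) y₀)⁻¹ y := fun y hy =>
    hasDerivAt_integral_of_continuousOn hIopen hIconn hinv_deriv.continuousOn hy₀ hy
  have hg'₀ : ∀ y ∈ I, (deriv (f y) y₀)⁻¹ ≠ 0 := fun y hy => inv_ne_zero (hne y hy)
  have hg₀ : g y₀ = 0 := integral_same
  have hhom : ∀ y ∈ I, ∀ z ∈ I, g (f y z) = g y + g z := fun y hy z hz =>
    map_mul_of_hasDerivAt_inv_deriv hIopen hIconn.isPreconnected hy₀ hmul hassoc hmul_one hdiff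
      hne hg' hg₀ hy hz
  have hinj : InjOn g I := hIconn.convex.injOn_of_hasDerivAt_ne_zero hg' hg'₀
  have hsurj : g '' I = univ :=
    image_eq_univ_of_map_mul (isOpen_image_of_hasStrictDerivAt hIopen (fun y hy =>
      (hg_smooth.contDiffAt (hIopen.mem_nhds hy)).hasStrictDerivAt' (hg' y hy) hk₀) hg'₀)
      hy₀ hmul hinv_mem hmul_inv hg₀ hhom
  exact ⟨hg_smooth, ⟨mapsTo_univ _ _, hinj, hsurj.ge⟩,
    exists_contDiff_inverse hk₀ hIopen hg_smooth hg' hg'₀ hinj hsurj.ge, hhom⟩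

/-- on an open interval `I ⊆ ℝ` carrying a `C^k` Lie group structure with
neutral element `y₀`, the derivative `∂₂f(y, y₀)` never vanishes, and
`g(y) := ∫_{y₀}^{y} (∂₂f(t, y₀))⁻¹ dt` is a `C^k`-diffeomorphism from `I` onto `ℝ`
and a group isomorphism onto `(ℝ, +)`. -/
theorem stmt_1
    (k : ℕ) (hk : 1 ≤ k)
    (I : Set ℝ) (hIopen : IsOpen I) (hIne : I.Nonempty) (hIconn : I.OrdConnected)
    (f : ℝ → ℝ → ℝ) (y₀ : ℝ) (hy₀ : y₀ ∈ I)
    (hmul : ∀ a ∈ I, ∀ b ∈ I, f a b ∈ I)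
    (hassoc : ∀ a ∈ I, ∀ b ∈ I, ∀ c ∈ I, f (f a b) c = f a (f b c))
    (hone_mul : ∀ a ∈ I, f y₀ a = a)
    (hmul_one : ∀ a ∈ I, f a y₀ = a)
    (inv : ℝ → ℝ)
    (hinv_mem : ∀ a ∈ I, inv a ∈ I)
    (hmul_inv : ∀ a ∈ I, f a (inv a) = y₀)
    (hinv_mul : ∀ a ∈ I, f (inv a) a = y₀)
    (hf_smooth : ContDiffOn ℝ k (fun p : ℝ × ℝ => f p.1 p.2) (I ×ˢ I))
    (hinv_smooth : ContDiffOn ℝ k inv I) :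
    (∀ y ∈ I, deriv (fun x => f y x) y₀ ≠ 0) ∧
    (let g : ℝ → ℝ := fun y => ∫ t in y₀..y, (deriv (fun x => f t x) y₀)⁻¹
     ContDiffOn ℝ k g I ∧
     Set.BijOn g I Set.univ ∧
     (∃ ginv : ℝ → ℝ, ContDiff ℝ k ginv ∧ (∀ x : ℝ, ginv x ∈ I) ∧
        (∀ y ∈ I, ginv (g y) = y) ∧ (∀ x : ℝ, g (ginv x) = x)) ∧
     (∀ y ∈ I, ∀ z ∈ I, g (f y z) = g y + g z)) :=
  stmt_1_general k hk I hIopen hIconn f y₀ hy₀ hmul hassoc hone_mul hmul_one inv hinv_mem hmul_inv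
    hinv_mul hf_smooth
end

section
/- If m : ℝ² → ℝ is a continuous map satisfying m(y T z) = m(y) + m(z) for all y, z ∈ ℝ² (i.e. m is a continuous group homomorphism from (ℝ², T) to (ℝ, +)), then there exists β ∈ ℝ such that m(z₁, z₂) = β z₁ for all (z₁, z₂) ∈ ℝ². -/
/-!
Conjugating `(0, s)` by `(log 2, 0)` gives `(0, 2s)`, so a homomorphism to the abelian group `ℝ`
takes the same value `m (0, s)` on both, while additivity along the normal subgroup `{0} × ℝ`
gives `m (0, 2s) = 2 m (0, s)`. Hence `m` vanishes there, factors through the first coordinate,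
and the resulting continuous additive map `ℝ → ℝ` is linear.
-/

theorem eq_mul_of_continuous_of_map_add {f : ℝ → ℝ} (hf : Continuous f)
    (hadd : ∀ x y, f (x + y) = f x + f y) (x : ℝ) : f x = f 1 * x := by
  simpa [mul_comm] using map_real_smul (AddMonoidHom.mk' f hadd) hf x 1

section

variable {m : ℝ × ℝ → ℝ}
  (hhom : ∀ y z : ℝ × ℝ, m (y.1 + z.1, y.2 + Real.exp y.1 * z.2) = m y + m z)
include hhom

theorem map_mk_eq_add (a b : ℝ) : m (a, b) = m (0, b) + m (a, 0) := by
  simpa using hhom (0, b) (a, 0)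

theorem map_zero_mk (s : ℝ) : m (0, s) = 0 := by
  have hconj : m (Real.log 2, 2 * s) = m (Real.log 2, 0) + m (0, s) := by
    simpa [Real.exp_log two_pos, two_mul] using hhom (Real.log 2, 0) (0, s)
  have hdouble : m (0, 2 * s) = m (0, s) + m (0, s) := by
    simpa [two_mul] using hhom (0, s) (0, s)
  have := map_mk_eq_add hhom (Real.log 2) (2 * s)
  linarith

theorem map_eq_map_fst (z : ℝ × ℝ) : m z = m (z.1, 0) := by
  simpa [map_zero_mk hhom] using map_mk_eq_add hhom z.1 z.2

end

/-- every continuous group homomorphism `m` from `(ℝ², T)` to `(ℝ, +)`, where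
`(y₁,y₂) T (z₁,z₂) = (y₁ + z₁, y₂ + e^{y₁} z₂)`, is of the form `m(z₁,z₂) = β z₁`. -/
theorem stmt_4
    (m : ℝ × ℝ → ℝ) (hm : Continuous m)
    (hhom : ∀ y z : ℝ × ℝ,
      m (y.1 + z.1, y.2 + Real.exp y.1 * z.2) = m y + m z) :
    ∃ β : ℝ, ∀ z : ℝ × ℝ, m z = β * z.1 := by
  have hcont : Continuous fun t => m (t, 0) := hm.comp (continuous_id.prodMk continuous_const)
  have hadd : ∀ x y, m (x + y, 0) = m (x, 0) + m (y, 0) := fun x y => by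
    simpa using hhom (x, 0) (y, 0)
  exact ⟨m (1, 0), fun z => (map_eq_map_fst hhom z).trans
    (eq_mul_of_continuous_of_map_add hcont hadd z.1)⟩
end

section
/- For all u = (u₁, u₂) ∈ ℝ², v = (v₁, v₂) ∈ ℝ² and all y ∈ D, one has [V(u), V(v)](y) = (u₁v₂ − u₂v₁) · J₂f(y, y₀) · Y₀; in particular [V(u), V(v)](y₀) = det(u, v) · Y₀, where det(u, v) := u₁v₂ − u₂v₁. -/
/-!
Write `L y := J₂f(y, y₀)`, so that `V(u)(y) = L y u` and the bracket at `y` is the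
antisymmetrisation of the bilinear map `(u, v) ↦ L'(y) (L y u) v`. Differentiating the identity
`L (a ⋆ y) = ∂₂f(a, y) ∘ L y` (the chain rule applied to associativity) at `y = y₀` gives
`L'(a) (L a w) = L a ∘ L'(y₀) w + ∂₂²f(a, y₀) w`, and the last term is symmetric in its two
arguments. Hence the bracket at `a` is `L a` applied to the bracket at `y₀`, and on `ℝ²` every
antisymmetric bilinear map is `det(u, v)` times its value on the canonical basis.
-/

open ContinuousLinearMap Filter Topology

theorem fderiv_clm_apply_const_apply {𝕜 E F G : Type*} [NontriviallyNormedField 𝕜]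
    [NormedAddCommGroup E] [NormedSpace 𝕜 E] [NormedAddCommGroup F] [NormedSpace 𝕜 F]
    [NormedAddCommGroup G] [NormedSpace 𝕜 G] {c : E → F →L[𝕜] G} {x : E}
    (hc : DifferentiableAt 𝕜 c x) (u : F) (w : E) :
    fderiv 𝕜 (fun y => c y u) x w = fderiv 𝕜 c x w u := by
  simp [fderiv_clm_apply hc (differentiableAt_const u)]

theorem apply_sub_apply_swap_eq_det_smul {F : Type*} [AddCommGroup F] [Module ℝ F]
    (B : ℝ × ℝ →ₗ[ℝ] ℝ × ℝ →ₗ[ℝ] F) (u v : ℝ × ℝ) :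
    B u v - B v u = (u.1 * v.2 - u.2 * v.1) • (B (1, 0) (0, 1) - B (0, 1) (1, 0)) := by
  have hbasis : ∀ p : ℝ × ℝ, p = p.1 • ((1 : ℝ), (0 : ℝ)) + p.2 • ((0 : ℝ), (1 : ℝ)) := by
    intro p; ext <;> simp
  conv_lhs => rw [hbasis u, hbasis v]
  simp only [map_add, map_smul, LinearMap.add_apply, LinearMap.smul_apply]
  module

section PartialDerivative

variable {E E' F : Type*} [NormedAddCommGroup E] [NormedSpace ℝ E]
  [NormedAddCommGroup E'] [NormedSpace ℝ E'] [NormedAddCommGroup F] [NormedSpace ℝ F]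
  {f : E → E' → F} {s : Set E} {t : Set E'}

theorem hasFDerivAt_right_of_differentiableOn_uncurry (hs : IsOpen s) (ht : IsOpen t)
    (hf : DifferentiableOn ℝ (fun p : E × E' => f p.1 p.2) (s ×ˢ t)) {a : E} {x : E'}
    (ha : a ∈ s) (hx : x ∈ t) :
    HasFDerivAt (f a) ((fderiv ℝ (fun p : E × E' => f p.1 p.2) (a, x)).comp (inr ℝ E E')) x :=
  (hf.differentiableAt ((hs.prod ht).mem_nhds ⟨ha, hx⟩)).hasFDerivAt.comp x
    (hasFDerivAt_prodMk_right a x)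

theorem differentiableOn_fderiv_right_of_contDiffOn_uncurry (hs : IsOpen s) (ht : IsOpen t)
    (hf : ContDiffOn ℝ 2 (fun p : E × E' => f p.1 p.2) (s ×ˢ t)) :
    DifferentiableOn ℝ (fun p : E × E' => fderiv ℝ (f p.1) p.2) (s ×ˢ t) := by
  refine (((hf.fderiv_of_isOpen (hs.prod ht) (by norm_num)).differentiableOn one_ne_zero).clm_comp
    (differentiableOn_const (inr ℝ E E'))).congr ?_
  rintro ⟨a, x⟩ ⟨ha, hx⟩
  exact (hasFDerivAt_right_of_differentiableOn_uncurry hs ht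
    (hf.differentiableOn two_ne_zero) ha hx).fderiv

theorem contDiffAt_right_of_contDiffOn_uncurry (ht : IsOpen t) {n : WithTop ℕ∞}
    (hf : ContDiffOn ℝ n (fun p : E × E' => f p.1 p.2) (s ×ˢ t)) {a : E} {x : E'}
    (ha : a ∈ s) (hx : x ∈ t) : ContDiffAt ℝ n (f a) x :=
  (hf.comp (contDiffOn_const.prodMk contDiffOn_id) fun _ hy => ⟨ha, hy⟩).contDiffAt
    (ht.mem_nhds hx)

end PartialDerivative

section LeftTranslation

variable {E : Type*} [NormedAddCommGroup E] [NormedSpace ℝ E] {D : Set E} {f : E → E → E}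
  {y₀ a : E}

/-- `J₂f(y, y₀)`: the derivative at the neutral element `y₀` of the left translation by `y`.
The vector field `V(u)` is `y ↦ leftTranslationDeriv f y₀ y u`. -/
noncomputable def leftTranslationDeriv (f : E → E → E) (y₀ y : E) : E →L[ℝ] E :=
  fderiv ℝ (f y) y₀

theorem leftTranslationDeriv_one (hD : IsOpen D) (hy₀ : y₀ ∈ D)
    (hone_mul : ∀ a ∈ D, f y₀ a = a) :
    leftTranslationDeriv f y₀ y₀ = ContinuousLinearMap.id ℝ E := by
  have hid : f y₀ =ᶠ[𝓝 y₀] id := eventually_of_mem (hD.mem_nhds hy₀) hone_mul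
  rw [leftTranslationDeriv, hid.fderiv_eq, fderiv_id]

theorem differentiableAt_leftTranslationDeriv (hD : IsOpen D) (hy₀ : y₀ ∈ D)
    (hf : ContDiffOn ℝ 2 (fun p : E × E => f p.1 p.2) (D ×ˢ D)) {y : E} (hy : y ∈ D) :
    DifferentiableAt ℝ (leftTranslationDeriv f y₀) y :=
  ((differentiableOn_fderiv_right_of_contDiffOn_uncurry hD hD hf).differentiableAt
    ((hD.prod hD).mem_nhds ⟨hy, hy₀⟩)).comp y
    (differentiableAt_id.prodMk (differentiableAt_const y₀))

theorem leftTranslationDeriv_mul_eventuallyEq (hD : IsOpen D) (hy₀ : y₀ ∈ D)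
    (hassoc : ∀ a ∈ D, ∀ b ∈ D, ∀ c ∈ D, f (f a b) c = f a (f b c))
    (hmul_one : ∀ a ∈ D, f a y₀ = a)
    (hf : DifferentiableOn ℝ (fun p : E × E => f p.1 p.2) (D ×ˢ D)) (ha : a ∈ D) :
    (fun y => leftTranslationDeriv f y₀ (f a y)) =ᶠ[𝓝 y₀]
      fun y => (fderiv ℝ (f a) y).comp (leftTranslationDeriv f y₀ y) := by
  have hright : ∀ {b x}, b ∈ D → x ∈ D → DifferentiableAt ℝ (f b) x := fun hb hx =>
    (hasFDerivAt_right_of_differentiableOn_uncurry hD hD hf hb hx).differentiableAt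
  filter_upwards [hD.mem_nhds hy₀] with y hy
  have hassoc_y : f (f a y) =ᶠ[𝓝 y₀] f a ∘ f y :=
    eventually_of_mem (hD.mem_nhds hy₀) fun x hx => hassoc a ha y hy x hx
  have hfa : DifferentiableAt ℝ (f a) (f y y₀) := by rw [hmul_one y hy]; exact hright ha hy
  rw [leftTranslationDeriv, hassoc_y.fderiv_eq, fderiv_comp y₀ hfa (hright hy hy₀),
    hmul_one y hy, leftTranslationDeriv]

theorem fderiv_leftTranslationDeriv_apply_apply (hD : IsOpen D) (hy₀ : y₀ ∈ D)
    (hassoc : ∀ a ∈ D, ∀ b ∈ D, ∀ c ∈ D, f (f a b) c = f a (f b c))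
    (hone_mul : ∀ a ∈ D, f y₀ a = a) (hmul_one : ∀ a ∈ D, f a y₀ = a)
    (hf : ContDiffOn ℝ 2 (fun p : E × E => f p.1 p.2) (D ×ˢ D)) (ha : a ∈ D) (w z : E) :
    fderiv ℝ (leftTranslationDeriv f y₀) a (leftTranslationDeriv f y₀ a w) z =
      leftTranslationDeriv f y₀ a (fderiv ℝ (leftTranslationDeriv f y₀) y₀ w z) +
        fderiv ℝ (fderiv ℝ (f a)) y₀ w z := by
  set L := leftTranslationDeriv f y₀
  have hfa : ContDiffAt ℝ 2 (f a) y₀ := contDiffAt_right_of_contDiffOn_uncurry hD hf ha hy₀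
  have hL_mul : HasFDerivAt (fun y => L (f a y)) ((fderiv ℝ L a).comp (L a)) y₀ := by
    have hLa : HasFDerivAt L (fderiv ℝ L a) (f a y₀) := by
      rw [hmul_one a ha]; exact (differentiableAt_leftTranslationDeriv hD hy₀ hf ha).hasFDerivAt
    exact hLa.comp y₀ (hfa.differentiableAt two_ne_zero).hasFDerivAt
  have hfa' : DifferentiableAt ℝ (fderiv ℝ (f a)) y₀ :=
    (hfa.fderiv_right (m := 1) (by norm_num)).differentiableAt one_ne_zero
  have hcomp := hfa'.hasFDerivAt.clm_comp
    (differentiableAt_leftTranslationDeriv hD hy₀ hf hy₀).hasFDerivAt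
  have heq := (hcomp.congr_of_eventuallyEq (leftTranslationDeriv_mul_eventuallyEq hD hy₀
    hassoc hmul_one (hf.differentiableOn two_ne_zero) ha)).unique hL_mul
  have happly := congr($heq w z)
  simp only [leftTranslationDeriv_one hD hy₀ hone_mul, add_apply, comp_apply, compL_apply,
    flip_apply, comp_id, L] at happly
  exact happly.symm

theorem fderiv_leftTranslationDeriv_sub_swap (hD : IsOpen D) (hy₀ : y₀ ∈ D)
    (hassoc : ∀ a ∈ D, ∀ b ∈ D, ∀ c ∈ D, f (f a b) c = f a (f b c))
    (hone_mul : ∀ a ∈ D, f y₀ a = a) (hmul_one : ∀ a ∈ D, f a y₀ = a)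
    (hf : ContDiffOn ℝ 2 (fun p : E × E => f p.1 p.2) (D ×ˢ D)) (ha : a ∈ D) (u v : E) :
    fderiv ℝ (leftTranslationDeriv f y₀) a (leftTranslationDeriv f y₀ a u) v -
        fderiv ℝ (leftTranslationDeriv f y₀) a (leftTranslationDeriv f y₀ a v) u =
      leftTranslationDeriv f y₀ a (fderiv ℝ (leftTranslationDeriv f y₀) y₀ u v -
        fderiv ℝ (leftTranslationDeriv f y₀) y₀ v u) := by
  have hsymm : IsSymmSndFDerivAt ℝ (f a) y₀ :=
    (contDiffAt_right_of_contDiffOn_uncurry hD hf ha hy₀).isSymmSndFDerivAt (by simp)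
  rw [fderiv_leftTranslationDeriv_apply_apply hD hy₀ hassoc hone_mul hmul_one hf ha,
    fderiv_leftTranslationDeriv_apply_apply hD hy₀ hassoc hone_mul hmul_one hf ha, hsymm u v,
    map_sub]
  abel

end LeftTranslation

theorem stmt_7_general
    (k : ℕ) (hk : 2 ≤ k)
    (D : Set (ℝ × ℝ)) (hDopen : IsOpen D)
    (f : ℝ × ℝ → ℝ × ℝ → ℝ × ℝ) (y₀ : ℝ × ℝ) (hy₀ : y₀ ∈ D)
    (hassoc : ∀ a ∈ D, ∀ b ∈ D, ∀ c ∈ D, f (f a b) c = f a (f b c))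
    (hone_mul : ∀ a ∈ D, f y₀ a = a)
    (hmul_one : ∀ a ∈ D, f a y₀ = a)
    (hf_smooth : ContDiffOn ℝ k (fun p : (ℝ × ℝ) × (ℝ × ℝ) => f p.1 p.2) (D ×ˢ D)) :
    let V : ℝ × ℝ → ℝ × ℝ → ℝ × ℝ := fun u y => fderiv ℝ (fun x => f y x) y₀ u
    let Y₀ : ℝ × ℝ :=
      fderiv ℝ (V ((0 : ℝ), (1 : ℝ))) y₀ (V ((1 : ℝ), (0 : ℝ)) y₀)
        - fderiv ℝ (V ((1 : ℝ), (0 : ℝ))) y₀ (V ((0 : ℝ), (1 : ℝ)) y₀)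
    ∀ u v : ℝ × ℝ, ∀ y ∈ D,
      (fderiv ℝ (V v) y (V u y) - fderiv ℝ (V u) y (V v y) =
        (u.1 * v.2 - u.2 * v.1) • fderiv ℝ (fun x => f y x) y₀ Y₀) ∧
      (fderiv ℝ (V v) y₀ (V u y₀) - fderiv ℝ (V u) y₀ (V v y₀) =
        (u.1 * v.2 - u.2 * v.1) • Y₀) := by
  intro V Y₀ u v y hy
  have hf : ContDiffOn ℝ 2 (fun p : (ℝ × ℝ) × (ℝ × ℝ) => f p.1 p.2) (D ×ˢ D) :=
    hf_smooth.of_le (by exact_mod_cast hk)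
  set L := leftTranslationDeriv f y₀
  have hL₀ : L y₀ = ContinuousLinearMap.id ℝ _ := leftTranslationDeriv_one hDopen hy₀ hone_mul
  have hVL : ∀ u z, V u z = L z u := fun _ _ => rfl
  have hV : ∀ z ∈ D, ∀ u w, fderiv ℝ (V u) z w = fderiv ℝ L z w u := fun z hz =>
    fderiv_clm_apply_const_apply (differentiableAt_leftTranslationDeriv hDopen hy₀ hf hz)
  have hY₀ : Y₀ = fderiv ℝ L y₀ (1, 0) (0, 1) - fderiv ℝ L y₀ (0, 1) (1, 0) := by
    simp only [Y₀, hV y₀ hy₀, hVL, hL₀, id_apply]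
  have hbracket : ∀ z ∈ D, fderiv ℝ (V v) z (V u z) - fderiv ℝ (V u) z (V v z) =
      (u.1 * v.2 - u.2 * v.1) • L z Y₀ := by
    intro z hz
    have hdet := apply_sub_apply_swap_eq_det_smul (toLinearMap₁₂ (fderiv ℝ L y₀)) u v
    simp only [toLinearMap₁₂_apply_apply_apply] at hdet
    rw [hV z hz, hV z hz, hVL, hVL, fderiv_leftTranslationDeriv_sub_swap hDopen hy₀ hassoc
      hone_mul hmul_one hf hz, hdet, map_smul, hY₀]
  refine ⟨hbracket y hy, ?_⟩
  simpa only [hL₀, id_apply] using hbracket y₀ hy₀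

/-- for all `u, v ∈ ℝ²` and `y ∈ D`,
`[V(u), V(v)](y) = (u₁v₂ − u₂v₁) · J₂f(y, y₀) · Y₀`; in particular
`[V(u), V(v)](y₀) = det(u, v) · Y₀`. -/
theorem stmt_7
    (k : ℕ) (hk : 2 ≤ k)
    (D : Set (ℝ × ℝ)) (hDopen : IsOpen D) (hDconn : IsConnected D)
    (hDsc : SimplyConnectedSpace D)
    (f : ℝ × ℝ → ℝ × ℝ → ℝ × ℝ) (y₀ : ℝ × ℝ) (hy₀ : y₀ ∈ D)
    (hmul : ∀ a ∈ D, ∀ b ∈ D, f a b ∈ D)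
    (hassoc : ∀ a ∈ D, ∀ b ∈ D, ∀ c ∈ D, f (f a b) c = f a (f b c))
    (hone_mul : ∀ a ∈ D, f y₀ a = a)
    (hmul_one : ∀ a ∈ D, f a y₀ = a)
    (inv : ℝ × ℝ → ℝ × ℝ)
    (hinv_mem : ∀ a ∈ D, inv a ∈ D)
    (hmul_inv : ∀ a ∈ D, f a (inv a) = y₀)
    (hinv_mul : ∀ a ∈ D, f (inv a) a = y₀)
    (hf_smooth : ContDiffOn ℝ k (fun p : (ℝ × ℝ) × (ℝ × ℝ) => f p.1 p.2) (D ×ˢ D))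
    (hinv_smooth : ContDiffOn ℝ k inv D) :
    let V : ℝ × ℝ → ℝ × ℝ → ℝ × ℝ := fun u y => fderiv ℝ (fun x => f y x) y₀ u
    let Y₀ : ℝ × ℝ :=
      fderiv ℝ (V ((0 : ℝ), (1 : ℝ))) y₀ (V ((1 : ℝ), (0 : ℝ)) y₀)
        - fderiv ℝ (V ((1 : ℝ), (0 : ℝ))) y₀ (V ((0 : ℝ), (1 : ℝ)) y₀)
    ∀ u v : ℝ × ℝ, ∀ y ∈ D,
      (fderiv ℝ (V v) y (V u y) - fderiv ℝ (V u) y (V v y) =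
        (u.1 * v.2 - u.2 * v.1) • fderiv ℝ (fun x => f y x) y₀ Y₀) ∧
      (fderiv ℝ (V v) y₀ (V u y₀) - fderiv ℝ (V u) y₀ (V v y₀) =
        (u.1 * v.2 - u.2 * v.1) • Y₀) :=
  stmt_7_general k hk D hDopen f y₀ hy₀ hassoc hone_mul hmul_one hf_smooth
end

section
/- The group (D, ⋆) is commutative if and only if Y₀ = (0, 0). -/
/-!
Let `B(w, u) = D(V u)(y₀) w`; this is the mixed second derivative `∂₁∂₂f(y₀, y₀)`, and
`Y₀ = B(e₁, e₂) - B(e₂, e₁)`. If the group is commutative, then `J₂f(a, y₀) = J₁f(y₀, a)`, and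
differentiating in `a` together with Schwarz's theorem shows that `B` is symmetric.

Conversely, a differentiable `Φ` on `D` with `dΦ(y₀) = 0` that intertwines every left translation
`x ↦ b ⋆ x` with a map differentiable at `Φ(y₀)` has `dΦ(b) ∘ J₂f(b, y₀) = 0`; as `J₂f(b, y₀)` is
invertible, `dΦ = 0` and `Φ` is constant on the connected set `D`. The derivative at `y₀` of
`Ad a = d(x ↦ a ⋆ x ⋆ a⁻¹)(y₀)` is `B - Bᵀ`, and `Ad` is multiplicative, so if `B` is symmetric
then `Ad ≡ id`. The same argument for `y ↦ (a ⋆ y ⋆ a⁻¹) ⋆ y⁻¹` shows that every `a` is central.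
-/

open ContinuousLinearMap Set Filter

lemma HasFDerivAt.unique_of_eqOn {F X : Type*} [NormedAddCommGroup F] [NormedSpace ℝ F]
    [NormedAddCommGroup X] [NormedSpace ℝ X] {g₁ g₂ : F → X} {g₁' g₂' : F →L[ℝ] X} {s : Set F}
    {p : F} (h₁ : HasFDerivAt g₁ g₁' p) (hs : IsOpen s) (hp : p ∈ s) (hg : EqOn g₁ g₂ s)
    (h₂ : HasFDerivAt g₂ g₂' p) : g₁' = g₂' :=
  h₁.unique (h₂.congr_of_eventuallyEq (eventuallyEq_of_mem (hs.mem_nhds hp) hg))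

structure C2GroupLaw (E : Type*) [NormedAddCommGroup E] [NormedSpace ℝ E] where
  D : Set E
  isOpen : IsOpen D
  isPreconnected : IsPreconnected D
  f : E → E → E
  y₀ : E
  y₀_mem : y₀ ∈ D
  inv : E → E
  mul_mem : ∀ a ∈ D, ∀ b ∈ D, f a b ∈ D
  mul_assoc : ∀ a ∈ D, ∀ b ∈ D, ∀ c ∈ D, f (f a b) c = f a (f b c)
  one_mul : ∀ a ∈ D, f y₀ a = a
  mul_one : ∀ a ∈ D, f a y₀ = a
  inv_mem : ∀ a ∈ D, inv a ∈ D
  mul_inv_cancel : ∀ a ∈ D, f a (inv a) = y₀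
  inv_mul_cancel : ∀ a ∈ D, f (inv a) a = y₀
  contDiffOn_f : ContDiffOn ℝ 2 (Function.uncurry f) (D ×ˢ D)
  differentiableOn_inv : DifferentiableOn ℝ inv D

noncomputable section

namespace C2GroupLaw

variable {E : Type*} [NormedAddCommGroup E] [NormedSpace ℝ E] (G : C2GroupLaw E) {a b : E}

lemma inv_y₀ : G.inv G.y₀ = G.y₀ := by
  simpa only [G.one_mul _ (G.inv_mem _ G.y₀_mem)] using G.mul_inv_cancel _ G.y₀_mem

lemma eq_inv_of_mul_eq {u w : E} (hu : u ∈ G.D) (hw : w ∈ G.D) (h : G.f u w = G.y₀) :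
    u = G.inv w :=
  calc u = G.f u (G.f w (G.inv w)) := by rw [G.mul_inv_cancel _ hw, G.mul_one _ hu]
    _ = G.f (G.f u w) (G.inv w) := (G.mul_assoc _ hu _ hw _ (G.inv_mem _ hw)).symm
    _ = G.inv w := by rw [h, G.one_mul _ (G.inv_mem _ hw)]

lemma eq_of_mul_inv_eq {u w : E} (hu : u ∈ G.D) (hw : w ∈ G.D) (h : G.f u (G.inv w) = G.y₀) :
    u = w :=
  calc u = G.f u (G.f (G.inv w) w) := by rw [G.inv_mul_cancel _ hw, G.mul_one _ hu]
    _ = G.f (G.f u (G.inv w)) w := (G.mul_assoc _ hu _ (G.inv_mem _ hw) _ hw).symm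
    _ = w := by rw [h, G.one_mul _ hw]

lemma inv_mul (ha : a ∈ G.D) (hb : b ∈ G.D) : G.inv (G.f a b) = G.f (G.inv b) (G.inv a) := by
  refine (G.eq_inv_of_mul_eq (G.mul_mem _ (G.inv_mem _ hb) _ (G.inv_mem _ ha))
    (G.mul_mem _ ha _ hb) ?_).symm
  rw [G.mul_assoc _ (G.inv_mem _ hb) _ (G.inv_mem _ ha) _ (G.mul_mem _ ha _ hb),
    ← G.mul_assoc _ (G.inv_mem _ ha) _ ha _ hb, G.inv_mul_cancel _ ha, G.one_mul _ hb,
    G.inv_mul_cancel _ hb]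

def conj (a x : E) : E := G.f (G.f a x) (G.inv a)

lemma conj_mem (ha : a ∈ G.D) {x : E} (hx : x ∈ G.D) : G.conj a x ∈ G.D :=
  G.mul_mem _ (G.mul_mem _ ha _ hx) _ (G.inv_mem _ ha)

lemma conj_y₀ (ha : a ∈ G.D) : G.conj a G.y₀ = G.y₀ := by
  rw [conj, G.mul_one _ ha, G.mul_inv_cancel _ ha]

lemma conj_mul (ha : a ∈ G.D) {x y : E} (hx : x ∈ G.D) (hy : y ∈ G.D) :
    G.conj a (G.f x y) = G.f (G.conj a x) (G.conj a y) := by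
  have ha' := G.inv_mem _ ha
  rw [conj, conj, conj,
    G.mul_assoc _ (G.mul_mem _ ha _ hx) _ ha' _ (G.mul_mem _ (G.mul_mem _ ha _ hy) _ ha'),
    ← G.mul_assoc _ ha' _ (G.mul_mem _ ha _ hy) _ ha', ← G.mul_assoc _ ha' _ ha _ hy,
    G.inv_mul_cancel _ ha, G.one_mul _ hy, ← G.mul_assoc _ (G.mul_mem _ ha _ hx) _ hy _ ha',
    G.mul_assoc _ ha _ hx _ hy]

lemma conj_conj (ha : a ∈ G.D) (hb : b ∈ G.D) {x : E} (hx : x ∈ G.D) :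
    G.conj (G.f a b) x = G.conj a (G.conj b x) := by
  have hbx := G.mul_mem _ hb _ hx
  rw [conj, conj, conj, G.inv_mul ha hb, G.mul_assoc _ ha _ hb _ hx,
    ← G.mul_assoc _ (G.mul_mem _ ha _ hbx) _ (G.inv_mem _ hb) _ (G.inv_mem _ ha),
    G.mul_assoc _ ha _ hbx _ (G.inv_mem _ hb)]

lemma conj_mul_mul_inv (ha : a ∈ G.D) (hb : b ∈ G.D) {x : E} (hx : x ∈ G.D) :
    G.f (G.conj a (G.f b x)) (G.inv (G.f b x)) =
      G.f (G.f (G.conj a b) (G.f (G.conj a x) (G.inv x))) (G.inv b) := by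
  have hab := G.conj_mem ha hb
  rw [G.conj_mul ha hb hx, G.inv_mul hb hx,
    ← G.mul_assoc _ (G.mul_mem _ hab _ (G.conj_mem ha hx)) _ (G.inv_mem _ hx) _ (G.inv_mem _ hb),
    G.mul_assoc _ hab _ (G.conj_mem ha hx) _ (G.inv_mem _ hx)]

lemma isOpen_prod : IsOpen (G.D ×ˢ G.D) := G.isOpen.prod G.isOpen

def df : E × E → E × E →L[ℝ] E := fderiv ℝ (Function.uncurry G.f)

def d2f : E × E →L[ℝ] E × E →L[ℝ] E := fderiv ℝ G.df (G.y₀, G.y₀)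

def J₁ (a b : E) : E →L[ℝ] E := (G.df (a, b)).comp (inl ℝ E E)

def J₂ (a b : E) : E →L[ℝ] E := (G.df (a, b)).comp (inr ℝ E E)

lemma hasFDerivAt_uncurry {p : E × E} (hp : p ∈ G.D ×ˢ G.D) :
    HasFDerivAt (Function.uncurry G.f) (G.df p) p :=
  ((G.contDiffOn_f.contDiffAt (G.isOpen_prod.mem_nhds hp)).differentiableAt
    (by norm_num)).hasFDerivAt

lemma differentiableAt_df {p : E × E} (hp : p ∈ G.D ×ˢ G.D) : DifferentiableAt ℝ G.df p :=
  ((G.contDiffOn_f.fderiv_of_isOpen G.isOpen_prod (m := 1) (by norm_num)).contDiffAt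
    (G.isOpen_prod.mem_nhds hp)).differentiableAt (by norm_num)

lemma d2f_symm (v w : E × E) : G.d2f v w = G.d2f w v :=
  (G.contDiffOn_f.contDiffAt (G.isOpen_prod.mem_nhds ⟨G.y₀_mem, G.y₀_mem⟩)).isSymmSndFDerivAt
    (by simp) v w

variable {F : Type*} [NormedAddCommGroup F] [NormedSpace ℝ F]

lemma hasFDerivAt_f_comp {α β : F → E} {A B : F →L[ℝ] E} {p : F} (hα : HasFDerivAt α A p)
    (hβ : HasFDerivAt β B p) (hαD : α p ∈ G.D) (hβD : β p ∈ G.D) :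
    HasFDerivAt (fun x => G.f (α x) (β x))
      ((G.J₁ (α p) (β p)).comp A + (G.J₂ (α p) (β p)).comp B) p := by
  refine ((G.hasFDerivAt_uncurry ⟨hαD, hβD⟩).comp p (hα.prodMk hβ)).congr_fderiv ?_
  ext x
  simp [J₁, J₂, ← map_add]

lemma differentiableAt_f_comp {α β : F → E} {p : F} (hα : DifferentiableAt ℝ α p)
    (hβ : DifferentiableAt ℝ β p) (hαD : α p ∈ G.D) (hβD : β p ∈ G.D) :
    DifferentiableAt ℝ (fun x => G.f (α x) (β x)) p :=
  (G.hasFDerivAt_f_comp hα.hasFDerivAt hβ.hasFDerivAt hαD hβD).differentiableAt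

lemma hasFDerivAt_f_left (ha : a ∈ G.D) (hb : b ∈ G.D) :
    HasFDerivAt (fun x => G.f x b) (G.J₁ a b) a := by
  simpa using G.hasFDerivAt_f_comp (hasFDerivAt_id a) (hasFDerivAt_const b a) ha hb

lemma hasFDerivAt_f_right (ha : a ∈ G.D) (hb : b ∈ G.D) :
    HasFDerivAt (fun x => G.f a x) (G.J₂ a b) b := by
  simpa using G.hasFDerivAt_f_comp (hasFDerivAt_const a b) (hasFDerivAt_id b) ha hb

lemma J₁_y₀ (ha : a ∈ G.D) : G.J₁ a G.y₀ = .id ℝ E :=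
  (G.hasFDerivAt_f_left ha G.y₀_mem).unique_of_eqOn G.isOpen ha G.mul_one (hasFDerivAt_id a)

lemma J₂_y₀_y₀ : G.J₂ G.y₀ G.y₀ = .id ℝ E :=
  (G.hasFDerivAt_f_right G.y₀_mem G.y₀_mem).unique_of_eqOn G.isOpen G.y₀_mem G.one_mul
    (hasFDerivAt_id _)

lemma eq_zero_of_comp_J₂_eq_zero {T : E →L[ℝ] F} (ha : a ∈ G.D)
    (h : T.comp (G.J₂ a G.y₀) = 0) : T = 0 := by
  have hL : HasFDerivAt (fun x => G.f a (G.f (G.inv a) x))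
      ((G.J₂ a G.y₀).comp (G.J₂ (G.inv a) a)) a := by
    simpa [G.inv_mul_cancel _ ha] using G.hasFDerivAt_f_comp (hasFDerivAt_const a a)
      (G.hasFDerivAt_f_right (G.inv_mem _ ha) ha) ha (by rw [G.inv_mul_cancel _ ha]; exact G.y₀_mem)
  have hright : (G.J₂ a G.y₀).comp (G.J₂ (G.inv a) a) = .id ℝ E :=
    hL.unique_of_eqOn G.isOpen ha (fun x hx => by
      dsimp only [id]
      rw [← G.mul_assoc _ ha _ (G.inv_mem _ ha) _ hx, G.mul_inv_cancel _ ha, G.one_mul _ hx])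
      (hasFDerivAt_id a)
  calc T = (T.comp (G.J₂ a G.y₀)).comp (G.J₂ (G.inv a) a) := by
        rw [ContinuousLinearMap.comp_assoc, hright, comp_id]
    _ = 0 := by rw [h, zero_comp]

lemma hasFDerivAt_inv {y : E} (hy : y ∈ G.D) : HasFDerivAt G.inv (fderiv ℝ G.inv y) y :=
  (G.differentiableOn_inv.differentiableAt (G.isOpen.mem_nhds hy)).hasFDerivAt

lemma fderiv_inv_y₀ : fderiv ℝ G.inv G.y₀ = -(.id ℝ E) := by
  have h := (G.hasFDerivAt_f_comp (hasFDerivAt_id G.y₀) (G.hasFDerivAt_inv G.y₀_mem) G.y₀_mem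
    (G.inv_mem _ G.y₀_mem)).unique_of_eqOn G.isOpen G.y₀_mem G.mul_inv_cancel
    (hasFDerivAt_const G.y₀ G.y₀)
  simp only [id_eq, G.inv_y₀, G.J₁_y₀ G.y₀_mem, G.J₂_y₀_y₀, ContinuousLinearMap.id_comp] at h
  exact eq_neg_of_add_eq_zero_right h

def Ad (a : E) : E →L[ℝ] E := (G.J₁ a (G.inv a)).comp (G.J₂ a G.y₀)

lemma hasFDerivAt_conj (ha : a ∈ G.D) : HasFDerivAt (G.conj a) (G.Ad a) G.y₀ := by
  have h := G.hasFDerivAt_f_comp (G.hasFDerivAt_f_right ha G.y₀_mem)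
    (hasFDerivAt_const (G.inv a) G.y₀) (by rw [G.mul_one _ ha]; exact ha) (G.inv_mem _ ha)
  rwa [comp_zero, add_zero, G.mul_one _ ha] at h

lemma Ad_y₀ : G.Ad G.y₀ = .id ℝ E := by
  rw [Ad, G.inv_y₀, G.J₁_y₀ G.y₀_mem, G.J₂_y₀_y₀, ContinuousLinearMap.id_comp]

lemma Ad_mul (ha : a ∈ G.D) (hb : b ∈ G.D) : G.Ad (G.f a b) = (G.Ad a).comp (G.Ad b) := by
  refine (G.hasFDerivAt_conj (G.mul_mem _ ha _ hb)).unique_of_eqOn G.isOpen G.y₀_mem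
    (fun x hx => G.conj_conj ha hb hx) ?_
  exact (G.conj_y₀ hb ▸ G.hasFDerivAt_conj ha).comp G.y₀ (G.hasFDerivAt_conj hb)

lemma differentiableOn_Ad : DifferentiableOn ℝ G.Ad G.D := by
  intro a ha
  have hdf : ∀ {γ : E → E × E}, DifferentiableAt ℝ γ a → γ a ∈ G.D ×ˢ G.D →
      DifferentiableAt ℝ (fun x => G.df (γ x)) a :=
    fun hγ hγD => (G.differentiableAt_df hγD).comp a hγ
  have h₁ := hdf (differentiableAt_id.prodMk (G.hasFDerivAt_inv ha).differentiableAt)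
    ⟨ha, G.inv_mem _ ha⟩
  have h₂ := hdf (differentiableAt_id.prodMk (differentiableAt_const G.y₀)) ⟨ha, G.y₀_mem⟩
  exact ((h₁.clm_comp (differentiableAt_const _)).clm_comp
    (h₂.clm_comp (differentiableAt_const _))).differentiableWithinAt

lemma hasFDerivAt_df_comp {γ : E → E × E} {Γ : E →L[ℝ] E × E} (ι : E →L[ℝ] E × E)
    (hγ : HasFDerivAt γ Γ G.y₀) (hγy₀ : γ G.y₀ = (G.y₀, G.y₀)) :
    HasFDerivAt (fun a => (G.df (γ a)).comp ι) (G.d2f.bilinearComp Γ ι) G.y₀ := by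
  have hdf : HasFDerivAt G.df G.d2f (γ G.y₀) :=
    hγy₀ ▸ (G.differentiableAt_df ⟨G.y₀_mem, G.y₀_mem⟩).hasFDerivAt
  exact (((compL ℝ E (E × E) E).flip ι).hasFDerivAt.comp G.y₀ (hdf.comp G.y₀ hγ)).congr_fderiv
    (by ext; rfl)

def mixedDeriv : E →L[ℝ] E →L[ℝ] E := G.d2f.bilinearComp (inl ℝ E E) (inr ℝ E E)

lemma hasFDerivAt_J₂_y₀ : HasFDerivAt (fun a => G.J₂ a G.y₀) G.mixedDeriv G.y₀ :=
  G.hasFDerivAt_df_comp (inr ℝ E E) (hasFDerivAt_prodMk_left G.y₀ G.y₀) rfl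

lemma d2f_inl_inl (u v : E) : G.d2f (u, 0) (v, 0) = 0 := by
  have h := (G.hasFDerivAt_df_comp (inl ℝ E E) (hasFDerivAt_prodMk_left G.y₀ G.y₀)
    rfl).unique_of_eqOn G.isOpen G.y₀_mem (fun a ha => G.J₁_y₀ ha) (hasFDerivAt_const _ _)
  exact congr($h u v)

lemma d2f_inr_inl (u v : E) : G.d2f (0, u) (v, 0) = G.mixedDeriv v u := G.d2f_symm _ _

lemma fderiv_Ad_y₀_apply (u v : E) :
    fderiv ℝ G.Ad G.y₀ u v = G.mixedDeriv u v - G.mixedDeriv v u := by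
  have hJ₁ := G.hasFDerivAt_df_comp (inl ℝ E E)
    ((hasFDerivAt_id G.y₀).prodMk (G.hasFDerivAt_inv G.y₀_mem)) (by rw [id_eq, G.inv_y₀])
  have hAd : HasFDerivAt G.Ad _ G.y₀ := hJ₁.clm_comp G.hasFDerivAt_J₂_y₀
  rw [hAd.fderiv]
  simp only [add_apply, comp_apply, compL_apply, flip_apply, bilinearComp_apply, prod_apply,
    id_eq, coe_id', G.fderiv_inv_y₀, neg_apply, G.inv_y₀]
  change G.J₁ G.y₀ G.y₀ (G.mixedDeriv u v) + G.d2f (u, -u) (G.J₂ G.y₀ G.y₀ v, 0) = _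
  rw [G.J₁_y₀ G.y₀_mem, G.J₂_y₀_y₀, show ((u, -u) : E × E) = (u, 0) - (0, u) by simp, map_sub,
    sub_apply, G.d2f_inl_inl, G.d2f_inr_inl]
  simp [sub_eq_add_neg]

lemma apply_eq_apply_y₀_of_equivariant {Φ : E → F} (hΦ : DifferentiableOn ℝ Φ G.D)
    (hΦ₀ : fderiv ℝ Φ G.y₀ = 0)
    (hequiv : ∀ b ∈ G.D, ∃ A : F → F, DifferentiableAt ℝ A (Φ G.y₀) ∧
      ∀ x ∈ G.D, Φ (G.f b x) = A (Φ x))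
    (hb : b ∈ G.D) : Φ b = Φ G.y₀ := by
  have hΦ' : ∀ c ∈ G.D, HasFDerivAt Φ (fderiv ℝ Φ c) c := fun c hc =>
    (hΦ.differentiableAt (G.isOpen.mem_nhds hc)).hasFDerivAt
  refine G.isOpen.is_const_of_fderiv_eq_zero G.isPreconnected hΦ (fun c hc => ?_) hb G.y₀_mem
  obtain ⟨A, hA, hΦA⟩ := hequiv c hc
  have hΦc : HasFDerivAt Φ (fderiv ℝ Φ c) (G.f c G.y₀) := by rw [G.mul_one _ hc]; exact hΦ' c hc
  have hL := hΦc.comp G.y₀ (G.hasFDerivAt_f_right hc G.y₀_mem)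
  have hR := hA.hasFDerivAt.comp G.y₀ (hΦ' _ G.y₀_mem)
  rw [hΦ₀, comp_zero] at hR
  exact G.eq_zero_of_comp_J₂_eq_zero hc (hL.unique_of_eqOn G.isOpen G.y₀_mem hΦA hR)

lemma Ad_eq_id (hsymm : ∀ u v, G.mixedDeriv u v = G.mixedDeriv v u) (ha : a ∈ G.D) :
    G.Ad a = .id ℝ E := by
  rw [← G.Ad_y₀]
  refine G.apply_eq_apply_y₀_of_equivariant G.differentiableOn_Ad ?_
    (fun b hb => ⟨compL ℝ E E E (G.Ad b), (compL ℝ E E E (G.Ad b)).differentiableAt,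
      fun x hx => G.Ad_mul hb hx⟩) ha
  ext u v
  simp [G.fderiv_Ad_y₀_apply, hsymm u v]

lemma conj_eq_self (ha : a ∈ G.D) (hAd : G.Ad a = .id ℝ E) {y : E} (hy : y ∈ G.D) :
    G.conj a y = y := by
  have hmul_left : ∀ {c z : E}, c ∈ G.D → z ∈ G.D → DifferentiableAt ℝ (G.f c) z :=
    fun hc hz => (G.hasFDerivAt_f_right hc hz).differentiableAt
  set Φ : E → E := fun y => G.f (G.conj a y) (G.inv y)
  have hΦy₀ : Φ G.y₀ = G.y₀ := by
    simp only [Φ]; rw [G.conj_y₀ ha, G.inv_y₀, G.mul_one _ G.y₀_mem]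
  have hΦ : DifferentiableOn ℝ Φ G.D := fun y hy =>
    (G.differentiableAt_f_comp (G.differentiableAt_f_comp (hmul_left ha hy)
      (differentiableAt_const _) (G.mul_mem _ ha _ hy) (G.inv_mem _ ha))
      (G.hasFDerivAt_inv hy).differentiableAt (G.conj_mem ha hy)
      (G.inv_mem _ hy)).differentiableWithinAt
  have hΦ₀ : fderiv ℝ Φ G.y₀ = 0 := by
    have h := G.hasFDerivAt_f_comp (G.hasFDerivAt_conj ha) (G.hasFDerivAt_inv G.y₀_mem)
      (G.conj_mem ha G.y₀_mem) (G.inv_mem _ G.y₀_mem)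
    rw [G.conj_y₀ ha, G.inv_y₀, G.J₁_y₀ G.y₀_mem, G.J₂_y₀_y₀, hAd, G.fderiv_inv_y₀] at h
    rw [h.fderiv]
    simp
  have hequiv : ∀ b ∈ G.D, ∃ A : E → E, DifferentiableAt ℝ A (Φ G.y₀) ∧
      ∀ x ∈ G.D, Φ (G.f b x) = A (Φ x) := by
    intro b hb
    have hab := G.conj_mem ha hb
    refine ⟨fun z => G.f (G.f (G.conj a b) z) (G.inv b), ?_, fun x hx => ?_⟩
    · rw [hΦy₀]
      exact G.differentiableAt_f_comp (hmul_left hab G.y₀_mem) (differentiableAt_const _)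
        (by rw [G.mul_one _ hab]; exact hab) (G.inv_mem _ hb)
    · exact G.conj_mul_mul_inv ha hb hx
  exact G.eq_of_mul_inv_eq (G.conj_mem ha hy) hy
    ((G.apply_eq_apply_y₀_of_equivariant hΦ hΦ₀ hequiv hy).trans hΦy₀)

theorem comm_of_mixedDeriv_symm (hsymm : ∀ u v, G.mixedDeriv u v = G.mixedDeriv v u)
    (ha : a ∈ G.D) (hb : b ∈ G.D) : G.f a b = G.f b a :=
  calc G.f a b = G.f (G.conj a b) a := by
        rw [conj, G.mul_assoc _ (G.mul_mem _ ha _ hb) _ (G.inv_mem _ ha) _ ha,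
          G.inv_mul_cancel _ ha, G.mul_one _ (G.mul_mem _ ha _ hb)]
    _ = G.f b a := by rw [G.conj_eq_self ha (G.Ad_eq_id hsymm ha) hb]

theorem mixedDeriv_symm_of_comm (hcomm : ∀ a ∈ G.D, ∀ b ∈ G.D, G.f a b = G.f b a) (u v : E) :
    G.mixedDeriv u v = G.mixedDeriv v u := by
  have hJ : EqOn (fun a => G.J₂ a G.y₀) (fun a => G.J₁ G.y₀ a) G.D := fun a ha =>
    (G.hasFDerivAt_f_right ha G.y₀_mem).unique_of_eqOn G.isOpen G.y₀_mem (hcomm a ha)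
      (G.hasFDerivAt_f_left G.y₀_mem ha)
  have h := G.hasFDerivAt_J₂_y₀.unique_of_eqOn G.isOpen G.y₀_mem hJ
    (G.hasFDerivAt_df_comp (inl ℝ E E) (hasFDerivAt_prodMk_right G.y₀ G.y₀) rfl)
  rw [congr($h u v)]
  exact G.d2f_inr_inl u v

theorem comm_iff_mixedDeriv_symm :
    (∀ a ∈ G.D, ∀ b ∈ G.D, G.f a b = G.f b a) ↔ ∀ u v, G.mixedDeriv u v = G.mixedDeriv v u :=
  ⟨G.mixedDeriv_symm_of_comm, fun hsymm _ ha _ hb => G.comm_of_mixedDeriv_symm hsymm ha hb⟩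

lemma fderiv_f_y₀_y₀ : fderiv ℝ (fun x => G.f G.y₀ x) G.y₀ = .id ℝ E := by
  rw [(G.hasFDerivAt_f_right G.y₀_mem G.y₀_mem).fderiv, G.J₂_y₀_y₀]

lemma fderiv_fderiv_f_y₀_apply (u w : E) :
    fderiv ℝ (fun y => fderiv ℝ (fun x => G.f y x) G.y₀ u) G.y₀ w = G.mixedDeriv w u := by
  have h := G.hasFDerivAt_J₂_y₀.clm_apply (hasFDerivAt_const u G.y₀)
  have hV : (fun y => fderiv ℝ (fun x => G.f y x) G.y₀ u) =ᶠ[nhds G.y₀] fun y => G.J₂ y G.y₀ u :=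
    eventuallyEq_of_mem (G.isOpen.mem_nhds G.y₀_mem) fun y hy => by
      rw [(G.hasFDerivAt_f_right hy G.y₀_mem).fderiv]
  rw [(h.congr_of_eventuallyEq hV).fderiv]
  simp

end C2GroupLaw

lemma ContinuousLinearMap.forall_apply_comm_iff_real_prod {X : Type*} [NormedAddCommGroup X]
    [NormedSpace ℝ X] (B : ℝ × ℝ →L[ℝ] ℝ × ℝ →L[ℝ] X) :
    (∀ u v, B u v = B v u) ↔ B (1, 0) (0, 1) = B (0, 1) (1, 0) := by
  refine ⟨fun h => h _ _, fun h ⟨a, b⟩ ⟨c, d⟩ => ?_⟩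
  have hbasis : ∀ x y : ℝ, ((x, y) : ℝ × ℝ) = x • (1, 0) + y • (0, 1) := by simp
  simp only [hbasis a b, hbasis c d, map_add, map_smul, add_apply, smul_apply, h]
  module

end

theorem stmt_8_general
    (k : ℕ) (hk : 2 ≤ k)
    (D : Set (ℝ × ℝ)) (hDopen : IsOpen D) (hDconn : IsConnected D)
    (f : ℝ × ℝ → ℝ × ℝ → ℝ × ℝ) (y₀ : ℝ × ℝ) (hy₀ : y₀ ∈ D)
    (hmul : ∀ a ∈ D, ∀ b ∈ D, f a b ∈ D)
    (hassoc : ∀ a ∈ D, ∀ b ∈ D, ∀ c ∈ D, f (f a b) c = f a (f b c))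
    (hone_mul : ∀ a ∈ D, f y₀ a = a)
    (hmul_one : ∀ a ∈ D, f a y₀ = a)
    (inv : ℝ × ℝ → ℝ × ℝ)
    (hinv_mem : ∀ a ∈ D, inv a ∈ D)
    (hmul_inv : ∀ a ∈ D, f a (inv a) = y₀)
    (hinv_mul : ∀ a ∈ D, f (inv a) a = y₀)
    (hf_smooth : ContDiffOn ℝ k (fun p : (ℝ × ℝ) × (ℝ × ℝ) => f p.1 p.2) (D ×ˢ D))
    (hinv_smooth : ContDiffOn ℝ k inv D) :
    let V : ℝ × ℝ → ℝ × ℝ → ℝ × ℝ := fun u y => fderiv ℝ (fun x => f y x) y₀ u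
    let Y₀ : ℝ × ℝ :=
      fderiv ℝ (V ((0 : ℝ), (1 : ℝ))) y₀ (V ((1 : ℝ), (0 : ℝ)) y₀)
        - fderiv ℝ (V ((1 : ℝ), (0 : ℝ))) y₀ (V ((0 : ℝ), (1 : ℝ)) y₀)
    (∀ a ∈ D, ∀ b ∈ D, f a b = f b a) ↔ Y₀ = (0 : ℝ × ℝ) := by
  intro V Y₀
  let G : C2GroupLaw (ℝ × ℝ) :=
    { D, f, y₀, inv
      isOpen := hDopen
      isPreconnected := hDconn.isPreconnected
      y₀_mem := hy₀
      mul_mem := hmul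
      mul_assoc := hassoc
      one_mul := hone_mul
      mul_one := hmul_one
      inv_mem := hinv_mem
      mul_inv_cancel := hmul_inv
      inv_mul_cancel := hinv_mul
      contDiffOn_f := hf_smooth.of_le (by exact_mod_cast hk)
      differentiableOn_inv := hinv_smooth.differentiableOn (by norm_cast; omega) }
  have hY₀ : Y₀ = G.mixedDeriv (1, 0) (0, 1) - G.mixedDeriv (0, 1) (1, 0) := by
    simp only [Y₀, V]
    erw [G.fderiv_f_y₀_y₀, G.fderiv_fderiv_f_y₀_apply, G.fderiv_fderiv_f_y₀_apply]
    rfl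
  rw [hY₀, sub_eq_zero, ← G.mixedDeriv.forall_apply_comm_iff_real_prod]
  exact G.comm_iff_mixedDeriv_symm

/-- the group `(D, ⋆)` is commutative if and only if `Y₀ = (0, 0)`. -/
theorem stmt_8
    (k : ℕ) (hk : 2 ≤ k)
    (D : Set (ℝ × ℝ)) (hDopen : IsOpen D) (hDconn : IsConnected D)
    (hDsc : SimplyConnectedSpace D)
    (f : ℝ × ℝ → ℝ × ℝ → ℝ × ℝ) (y₀ : ℝ × ℝ) (hy₀ : y₀ ∈ D)
    (hmul : ∀ a ∈ D, ∀ b ∈ D, f a b ∈ D)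
    (hassoc : ∀ a ∈ D, ∀ b ∈ D, ∀ c ∈ D, f (f a b) c = f a (f b c))
    (hone_mul : ∀ a ∈ D, f y₀ a = a)
    (hmul_one : ∀ a ∈ D, f a y₀ = a)
    (inv : ℝ × ℝ → ℝ × ℝ)
    (hinv_mem : ∀ a ∈ D, inv a ∈ D)
    (hmul_inv : ∀ a ∈ D, f a (inv a) = y₀)
    (hinv_mul : ∀ a ∈ D, f (inv a) a = y₀)
    (hf_smooth : ContDiffOn ℝ k (fun p : (ℝ × ℝ) × (ℝ × ℝ) => f p.1 p.2) (D ×ˢ D))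
    (hinv_smooth : ContDiffOn ℝ k inv D) :
    let V : ℝ × ℝ → ℝ × ℝ → ℝ × ℝ := fun u y => fderiv ℝ (fun x => f y x) y₀ u
    let Y₀ : ℝ × ℝ :=
      fderiv ℝ (V ((0 : ℝ), (1 : ℝ))) y₀ (V ((1 : ℝ), (0 : ℝ)) y₀)
        - fderiv ℝ (V ((1 : ℝ), (0 : ℝ))) y₀ (V ((0 : ℝ), (1 : ℝ)) y₀)
    (∀ a ∈ D, ∀ b ∈ D, f a b = f b a) ↔ Y₀ = (0 : ℝ × ℝ) :=
  stmt_8_general k hk D hDopen hDconn f y₀ hy₀ hmul hassoc hone_mul hmul_one inv hinv_mem hmul_inv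
    hinv_mul hf_smooth hinv_smooth
end

section
/- Let M : ℝ² → ℝ² be any linear map and i ∈ {1, 2}. For j ∈ {1, 2} define ω_j : D → ℝ by ω_j(y) := π_i(M · (J₂f(y, y₀))⁻¹ · e_j). Then for every y ∈ D, the antisymmetrized derivative satisfies ∂_{e₂}ω₁(y) − ∂_{e₁}ω₂(y) = det((J₂f(y, y₀))⁻¹) · π_i(M · Y₀), where ∂_{e_j} denotes the directional derivative in the direction e_j and π₁, π₂ are the coordinate projections of ℝ². In particular, if the group (D, ⋆) is commutative (so Y₀ = 0) or if π_i(M · Y₀) = 0, the ℝ-valued 1-form y ↦ π_i(M · (J₂f(y, y₀))⁻¹ · ) is closed on D. -/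
/-!
Write `A y = J₂f(y, y₀)` and `C = DA(y₀)`. Differentiating `A (y ⋆ b) = ∂₂f(y, b) ∘ A b` in `b`
at `b = y₀` gives `DA(y)[A(y) v] w = A(y) C(v, w) + D²(f y)(y₀)(v, w)`, whose last term is
symmetric in `v, w`. Since `D(A⁻¹)[h] = -A⁻¹ ∘ DA[h] ∘ A⁻¹`, the antisymmetrized derivative of
`y ↦ A(y)⁻¹ e` at `(e₁, e₂)` is therefore `C(v₁, v₂) - C(v₂, v₁)` with `vᵢ = A(y)⁻¹ eᵢ`. In the
plane this alternating form is `det A(y)⁻¹` times its value `C(e₁, e₂) - C(e₂, e₁) = Y₀` on the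
standard basis.
-/

open ContinuousLinearMap Filter Topology Function

section InverseDeriv

variable {𝕜 E : Type*} [NontriviallyNormedField 𝕜] [NormedAddCommGroup E] [NormedSpace 𝕜 E]

theorem IsUnit.apply_inverse_apply {T : E →L[𝕜] E} (hT : IsUnit T) (e : E) :
    T (T.inverse e) = e := by
  rw [← ringInverse_eq_inverse]
  exact congr($(Ring.mul_inverse_cancel T hT) e)

theorem IsUnit.inverse_apply_apply {T : E →L[𝕜] E} (hT : IsUnit T) (e : E) :
    T.inverse (T e) = e := by
  rw [← ringInverse_eq_inverse]
  exact congr($(Ring.inverse_mul_cancel T hT) e)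

variable [CompleteSpace E] {A : E → E →L[𝕜] E} {y : E}

theorem hasFDerivAt_inverse {A' : E →L[𝕜] E →L[𝕜] E} (hA : HasFDerivAt A A' y)
    (hAy : IsUnit (A y)) :
    HasFDerivAt (fun x => (A x).inverse)
      ((-mulLeftRight 𝕜 _ (A y).inverse (A y).inverse).comp A') y := by
  obtain ⟨u, hu⟩ := hAy
  rw [← hu, ← ringInverse_eq_inverse, Ring.inverse_unit]
  exact (hu ▸ hasFDerivAt_ringInverse u).comp y hA

theorem fderiv_inverse_apply (hA : DifferentiableAt 𝕜 A y) (hAy : IsUnit (A y)) (e h : E) :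
    fderiv 𝕜 (fun x => (A x).inverse e) y h =
      -(A y).inverse (fderiv 𝕜 A y h ((A y).inverse e)) := by
  rw [((hasFDerivAt_inverse hA.hasFDerivAt hAy).clm_apply (hasFDerivAt_const e y)).fderiv]
  simp

theorem fderiv_inverse_apply_sub_swap (hA : DifferentiableAt 𝕜 A y) (hAy : IsUnit (A y))
    (C : E →L[𝕜] E →L[𝕜] E) {H : E → E → E} (hH : ∀ v w, H v w = H w v)
    (hAC : ∀ v w, fderiv 𝕜 A y (A y v) w = A y (C v w) + H v w) (e₁ e₂ : E) :
    fderiv 𝕜 (fun x => (A x).inverse e₁) y e₂ - fderiv 𝕜 (fun x => (A x).inverse e₂) y e₁ =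
      C ((A y).inverse e₁) ((A y).inverse e₂) - C ((A y).inverse e₂) ((A y).inverse e₁) := by
  have hdir : ∀ e h, fderiv 𝕜 (fun x => (A x).inverse e) y h =
      -(C ((A y).inverse h) ((A y).inverse e) +
        (A y).inverse (H ((A y).inverse h) ((A y).inverse e))) := by
    intro e h
    rw [fderiv_inverse_apply hA hAy, ← hAy.apply_inverse_apply h, hAC, map_add,
      hAy.inverse_apply_apply, hAy.inverse_apply_apply]
  rw [hdir, hdir, hH]
  abel

end InverseDeriv

theorem LinearMap.det_prod_self_eq {R : Type*} [CommRing R] (T : (R × R) →ₗ[R] R × R) :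
    LinearMap.det T = (T (1, 0)).1 * (T (0, 1)).2 - (T (1, 0)).2 * (T (0, 1)).1 := by
  rw [← LinearMap.det_toMatrix (Module.Basis.finTwoProd R), Matrix.det_fin_two]
  simp [LinearMap.toMatrix_apply]
  ring

theorem ContinuousLinearMap.apply_sub_swap_apply_eq_det_smul {G : Type*} [NormedAddCommGroup G]
    [NormedSpace ℝ G] (C : ℝ × ℝ →L[ℝ] ℝ × ℝ →L[ℝ] G) (T : (ℝ × ℝ) →L[ℝ] ℝ × ℝ) :
    C (T (1, 0)) (T (0, 1)) - C (T (0, 1)) (T (1, 0)) =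
      LinearMap.det (T : (ℝ × ℝ) →ₗ[ℝ] ℝ × ℝ) • (C (1, 0) (0, 1) - C (0, 1) (1, 0)) := by
  have hdecomp : ∀ v : ℝ × ℝ, v = v.1 • ((1 : ℝ), (0 : ℝ)) + v.2 • ((0 : ℝ), (1 : ℝ)) :=
    fun v => by ext <;> simp
  rw [LinearMap.det_prod_self_eq, hdecomp (T (1, 0)), hdecomp (T (0, 1))]
  simp only [map_add, map_smul, add_apply, smul_apply, coe_coe]
  module

theorem fderiv_clm_inverse_apply_sub_swap_eq_det_smul {G : Type*} [NormedAddCommGroup G]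
    [NormedSpace ℝ G] (L : ℝ × ℝ →L[ℝ] G) {A : ℝ × ℝ → ℝ × ℝ →L[ℝ] ℝ × ℝ} {y : ℝ × ℝ}
    (hA : DifferentiableAt ℝ A y) (hAy : IsUnit (A y)) (C : ℝ × ℝ →L[ℝ] ℝ × ℝ →L[ℝ] ℝ × ℝ)
    {H : ℝ × ℝ → ℝ × ℝ → ℝ × ℝ} (hH : ∀ v w, H v w = H w v)
    (hAC : ∀ v w, fderiv ℝ A y (A y v) w = A y (C v w) + H v w) :
    fderiv ℝ (fun x => L ((A x).inverse (1, 0))) y (0, 1) -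
        fderiv ℝ (fun x => L ((A x).inverse (0, 1))) y (1, 0) =
      LinearMap.det ((A y).inverse : (ℝ × ℝ) →ₗ[ℝ] ℝ × ℝ) •
        L (C (1, 0) (0, 1) - C (0, 1) (1, 0)) := by
  have hL : ∀ e h, fderiv ℝ (fun x => L ((A x).inverse e)) y h =
      L (fderiv ℝ (fun x => (A x).inverse e) y h) := fun e h => by
    have hd : DifferentiableAt ℝ (fun x => (A x).inverse e) y :=
      (hasFDerivAt_inverse hA.hasFDerivAt hAy).differentiableAt.clm_apply
        (differentiableAt_const e)
    rw [fderiv_fun_comp y L.differentiableAt hd, L.fderiv]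
    rfl
  rw [hL, hL, ← map_sub, fderiv_inverse_apply_sub_swap hA hAy C hH hAC,
    apply_sub_swap_apply_eq_det_smul, map_smul]

theorem ContDiffAt.of_uncurry_right {𝕜 E F G : Type*} [NontriviallyNormedField 𝕜]
    [NormedAddCommGroup E] [NormedSpace 𝕜 E] [NormedAddCommGroup F] [NormedSpace 𝕜 F]
    [NormedAddCommGroup G] [NormedSpace 𝕜 G] {n : WithTop ℕ∞} {f : E → F → G} {a : E} {b : F}
    (hf : ContDiffAt 𝕜 n (uncurry f) (a, b)) : ContDiffAt 𝕜 n (f a) b :=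
  hf.comp b (contDiffAt_const.prodMk contDiffAt_id)

section LeftMulDeriv

variable (𝕜 : Type*) {E : Type*} [NontriviallyNormedField 𝕜] [NormedAddCommGroup E]
  [NormedSpace 𝕜 E]

/-- `J₂f(y, y₀)`: the derivative at the neutral element `y₀` of the left translation by `y`. -/
noncomputable def leftMulDeriv (f : E → E → E) (y₀ y : E) : E →L[𝕜] E :=
  fderiv 𝕜 (f y) y₀

variable {𝕜} {f : E → E → E} {D : Set E} {y₀ : E}

theorem contDiffAt_leftMulDeriv {y : E} (hf : ContDiffAt 𝕜 2 (uncurry f) (y, y₀)) :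
    ContDiffAt 𝕜 1 (leftMulDeriv 𝕜 f y₀) y :=
  ContDiffAt.fderiv (g := fun _ => y₀) hf contDiffAt_const (by norm_num)

theorem leftMulDeriv_base (hD : IsOpen D) (hy₀ : y₀ ∈ D) (hone_mul : ∀ a ∈ D, f y₀ a = a) :
    leftMulDeriv 𝕜 f y₀ y₀ = ContinuousLinearMap.id 𝕜 E := by
  have he : f y₀ =ᶠ[𝓝 y₀] id := eventually_of_mem (hD.mem_nhds hy₀) hone_mul
  rw [leftMulDeriv, he.fderiv_eq, fderiv_id]

theorem leftMulDeriv_mul (hD : IsOpen D) (hy₀ : y₀ ∈ D)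
    (hf : ∀ a ∈ D, ∀ b ∈ D, ContDiffAt 𝕜 2 (uncurry f) (a, b))
    (hassoc : ∀ a ∈ D, ∀ b ∈ D, ∀ c ∈ D, f (f a b) c = f a (f b c))
    (hmul_one : ∀ a ∈ D, f a y₀ = a) {a b : E} (ha : a ∈ D) (hb : b ∈ D) :
    leftMulDeriv 𝕜 f y₀ (f a b) = (fderiv 𝕜 (f a) b).comp (leftMulDeriv 𝕜 f y₀ b) := by
  have he : f (f a b) =ᶠ[𝓝 y₀] f a ∘ f b :=
    eventually_of_mem (hD.mem_nhds hy₀) (hassoc a ha b hb)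
  have hfa : DifferentiableAt 𝕜 (f a) (f b y₀) := by
    rw [hmul_one b hb]
    exact (hf a ha b hb).of_uncurry_right.differentiableAt (by norm_num)
  have hfb : DifferentiableAt 𝕜 (f b) y₀ :=
    (hf b hb y₀ hy₀).of_uncurry_right.differentiableAt (by norm_num)
  rw [leftMulDeriv, he.fderiv_eq, fderiv_comp y₀ hfa hfb, hmul_one b hb, leftMulDeriv]

theorem lieBracket_leftMulDeriv_apply (hD : IsOpen D) (hy₀ : y₀ ∈ D)
    (hone_mul : ∀ a ∈ D, f y₀ a = a) (hf : ContDiffAt 𝕜 2 (uncurry f) (y₀, y₀)) (u₁ u₂ : E) :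
    VectorField.lieBracket 𝕜 (fun y => leftMulDeriv 𝕜 f y₀ y u₁)
        (fun y => leftMulDeriv 𝕜 f y₀ y u₂) y₀ =
      fderiv 𝕜 (leftMulDeriv 𝕜 f y₀) y₀ u₁ u₂ - fderiv 𝕜 (leftMulDeriv 𝕜 f y₀) y₀ u₂ u₁ := by
  have hA := (contDiffAt_leftMulDeriv hf).differentiableAt one_ne_zero
  simp [VectorField.lieBracket, fderiv_clm_apply hA (differentiableAt_const _),
    leftMulDeriv_base hD hy₀ hone_mul]

theorem isUnit_leftMulDeriv [CompleteSpace 𝕜] [FiniteDimensional 𝕜 E] (hD : IsOpen D)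
    (hy₀ : y₀ ∈ D) (hf : ∀ a ∈ D, ∀ b ∈ D, ContDiffAt 𝕜 2 (uncurry f) (a, b))
    (hassoc : ∀ a ∈ D, ∀ b ∈ D, ∀ c ∈ D, f (f a b) c = f a (f b c))
    (hone_mul : ∀ a ∈ D, f y₀ a = a) (hmul_one : ∀ a ∈ D, f a y₀ = a)
    {inv : E → E} (hinv_mem : ∀ a ∈ D, inv a ∈ D) (hinv_mul : ∀ a ∈ D, f (inv a) a = y₀)
    {y : E} (hy : y ∈ D) : IsUnit (leftMulDeriv 𝕜 f y₀ y) := by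
  have hleft := leftMulDeriv_mul hD hy₀ hf hassoc hmul_one (hinv_mem y hy) hy
  rw [hinv_mul y hy, leftMulDeriv_base hD hy₀ hone_mul] at hleft
  have hleft' :
      (fderiv 𝕜 (f (inv y)) y : E →ₗ[𝕜] E) * (leftMulDeriv 𝕜 f y₀ y : E →ₗ[𝕜] E) = 1 :=
    congr(ContinuousLinearMap.toLinearMap $hleft.symm)
  have := FiniteDimensional.complete 𝕜 E
  exact isUnit_iff_isUnit_toLinearMap.mpr (IsUnit.of_mul_eq_one _ (mul_eq_one_comm.mp hleft'))

theorem fderiv_leftMulDeriv_apply (hD : IsOpen D) (hy₀ : y₀ ∈ D)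
    (hf : ∀ a ∈ D, ∀ b ∈ D, ContDiffAt 𝕜 2 (uncurry f) (a, b))
    (hassoc : ∀ a ∈ D, ∀ b ∈ D, ∀ c ∈ D, f (f a b) c = f a (f b c))
    (hone_mul : ∀ a ∈ D, f y₀ a = a) (hmul_one : ∀ a ∈ D, f a y₀ = a)
    {y : E} (hy : y ∈ D) (v w : E) :
    fderiv 𝕜 (leftMulDeriv 𝕜 f y₀) y (leftMulDeriv 𝕜 f y₀ y v) w =
      leftMulDeriv 𝕜 f y₀ y (fderiv 𝕜 (leftMulDeriv 𝕜 f y₀) y₀ v w) +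
        fderiv 𝕜 (fderiv 𝕜 (f y)) y₀ v w := by
  set A : E → E →L[𝕜] E := leftMulDeriv 𝕜 f y₀
  have hA : ∀ x ∈ D, HasFDerivAt A (fderiv 𝕜 A x) x := fun x hx =>
    ((contDiffAt_leftMulDeriv (hf x hx y₀ hy₀)).differentiableAt one_ne_zero).hasFDerivAt
  have hfy : ContDiffAt 𝕜 2 (f y) y₀ := (hf y hy y₀ hy₀).of_uncurry_right
  have hAy : HasFDerivAt A (fderiv 𝕜 A y) (f y y₀) := by
    rw [hmul_one y hy]
    exact hA y hy
  have hlhs : HasFDerivAt (fun b => A (f y b)) ((fderiv 𝕜 A y).comp (A y)) y₀ :=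
    hAy.comp y₀ (hfy.differentiableAt (by norm_num)).hasFDerivAt
  have hrhs := HasFDerivAt.clm_comp
    ((hfy.fderiv_right (m := 1) le_rfl).differentiableAt one_ne_zero).hasFDerivAt (hA y₀ hy₀)
  have heq : (fun b => A (f y b)) =ᶠ[𝓝 y₀] fun b => (fderiv 𝕜 (f y) b).comp (A b) :=
    eventually_of_mem (hD.mem_nhds hy₀) fun b hb =>
      leftMulDeriv_mul hD hy₀ hf hassoc hmul_one hy hb
  have hA₀ : A y₀ = ContinuousLinearMap.id 𝕜 E := leftMulDeriv_base hD hy₀ hone_mul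
  have h := congr($((hrhs.congr_of_eventuallyEq heq).unique hlhs) v w)
  simpa [hA₀, A, leftMulDeriv, add_comm] using h.symm

end LeftMulDeriv

theorem stmt_9_general
    (k : ℕ) (hk : 2 ≤ k)
    (D : Set (ℝ × ℝ)) (hDopen : IsOpen D)
    (f : ℝ × ℝ → ℝ × ℝ → ℝ × ℝ) (y₀ : ℝ × ℝ) (hy₀ : y₀ ∈ D)
    (hassoc : ∀ a ∈ D, ∀ b ∈ D, ∀ c ∈ D, f (f a b) c = f a (f b c))
    (hone_mul : ∀ a ∈ D, f y₀ a = a)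
    (hmul_one : ∀ a ∈ D, f a y₀ = a)
    (inv : ℝ × ℝ → ℝ × ℝ)
    (hinv_mem : ∀ a ∈ D, inv a ∈ D)
    (hinv_mul : ∀ a ∈ D, f (inv a) a = y₀)
    (hf_smooth : ContDiffOn ℝ k (fun p : (ℝ × ℝ) × (ℝ × ℝ) => f p.1 p.2) (D ×ˢ D))
    (M : (ℝ × ℝ) →L[ℝ] (ℝ × ℝ))
    (π : ℝ × ℝ → ℝ) (hπ : π = Prod.fst ∨ π = Prod.snd) :
    let V : ℝ × ℝ → ℝ × ℝ → ℝ × ℝ := fun u y => fderiv ℝ (fun x => f y x) y₀ u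
    let Y₀ : ℝ × ℝ :=
      fderiv ℝ (V ((0 : ℝ), (1 : ℝ))) y₀ (V ((1 : ℝ), (0 : ℝ)) y₀)
        - fderiv ℝ (V ((1 : ℝ), (0 : ℝ))) y₀ (V ((0 : ℝ), (1 : ℝ)) y₀)
    let ω : ℝ × ℝ → ℝ × ℝ → ℝ :=
      fun e y => π (M ((fderiv ℝ (fun x => f y x) y₀).inverse e))
    (∀ y ∈ D,
      fderiv ℝ (ω ((1 : ℝ), (0 : ℝ))) y ((0 : ℝ), (1 : ℝ))
          - fderiv ℝ (ω ((0 : ℝ), (1 : ℝ))) y ((1 : ℝ), (0 : ℝ)) =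
        LinearMap.det ((fderiv ℝ (fun x => f y x) y₀).inverse).toLinearMap * π (M Y₀)) ∧
    (π (M Y₀) = 0 → ∀ y ∈ D,
      fderiv ℝ (ω ((1 : ℝ), (0 : ℝ))) y ((0 : ℝ), (1 : ℝ))
          - fderiv ℝ (ω ((0 : ℝ), (1 : ℝ))) y ((1 : ℝ), (0 : ℝ)) = 0) := by
  intro V Y₀ ω
  obtain ⟨πL, rfl⟩ : ∃ πL : (ℝ × ℝ) →L[ℝ] ℝ, π = πL :=
    hπ.elim (fun h => ⟨fst ℝ ℝ ℝ, h⟩) (fun h => ⟨snd ℝ ℝ ℝ, h⟩)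
  have hf : ∀ a ∈ D, ∀ b ∈ D, ContDiffAt ℝ 2 (uncurry f) (a, b) := fun a ha b hb =>
    (hf_smooth.contDiffAt ((hDopen.prod hDopen).mem_nhds ⟨ha, hb⟩)).of_le (by exact_mod_cast hk)
  set C := fderiv ℝ (leftMulDeriv ℝ f y₀) y₀
  have hY₀ : Y₀ = C (1, 0) (0, 1) - C (0, 1) (1, 0) :=
    lieBracket_leftMulDeriv_apply hDopen hy₀ hone_mul (hf y₀ hy₀ y₀ hy₀) _ _
  have key : ∀ y ∈ D, fderiv ℝ (ω (1, 0)) y (0, 1) - fderiv ℝ (ω (0, 1)) y (1, 0) =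
      LinearMap.det ((fderiv ℝ (fun x => f y x) y₀).inverse).toLinearMap * πL (M Y₀) := by
    intro y hy
    rw [hY₀]
    exact fderiv_clm_inverse_apply_sub_swap_eq_det_smul (πL.comp M)
      ((contDiffAt_leftMulDeriv (hf y hy y₀ hy₀)).differentiableAt one_ne_zero)
      (isUnit_leftMulDeriv hDopen hy₀ hf hassoc hone_mul hmul_one hinv_mem hinv_mul hy) C
      ((hf y hy y₀ hy₀).of_uncurry_right.isSymmSndFDerivAt (by simp)).eq
      (fderiv_leftMulDeriv_apply hDopen hy₀ hf hassoc hone_mul hmul_one hy)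
  exact ⟨key, fun h0 y hy => by rw [key y hy, h0, mul_zero]⟩

/-- for any linear map `M : ℝ² → ℝ²` and `i ∈ {1,2}` (encoded by `π` being one of
the two coordinate projections), the forms `ω_j(y) = π_i(M (J₂f(y,y₀))⁻¹ e_j)` satisfy
`∂_{e₂}ω₁(y) − ∂_{e₁}ω₂(y) = det((J₂f(y,y₀))⁻¹) · π_i(M Y₀)` on `D`; in particular if
`π_i(M Y₀) = 0` the 1-form is closed. -/
theorem stmt_9
    (k : ℕ) (hk : 2 ≤ k)
    (D : Set (ℝ × ℝ)) (hDopen : IsOpen D) (hDconn : IsConnected D)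
    (hDsc : SimplyConnectedSpace D)
    (f : ℝ × ℝ → ℝ × ℝ → ℝ × ℝ) (y₀ : ℝ × ℝ) (hy₀ : y₀ ∈ D)
    (hmul : ∀ a ∈ D, ∀ b ∈ D, f a b ∈ D)
    (hassoc : ∀ a ∈ D, ∀ b ∈ D, ∀ c ∈ D, f (f a b) c = f a (f b c))
    (hone_mul : ∀ a ∈ D, f y₀ a = a)
    (hmul_one : ∀ a ∈ D, f a y₀ = a)
    (inv : ℝ × ℝ → ℝ × ℝ)
    (hinv_mem : ∀ a ∈ D, inv a ∈ D)
    (hmul_inv : ∀ a ∈ D, f a (inv a) = y₀)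
    (hinv_mul : ∀ a ∈ D, f (inv a) a = y₀)
    (hf_smooth : ContDiffOn ℝ k (fun p : (ℝ × ℝ) × (ℝ × ℝ) => f p.1 p.2) (D ×ˢ D))
    (hinv_smooth : ContDiffOn ℝ k inv D)
    (M : (ℝ × ℝ) →L[ℝ] (ℝ × ℝ))
    (π : ℝ × ℝ → ℝ) (hπ : π = Prod.fst ∨ π = Prod.snd) :
    let V : ℝ × ℝ → ℝ × ℝ → ℝ × ℝ := fun u y => fderiv ℝ (fun x => f y x) y₀ u
    let Y₀ : ℝ × ℝ :=
      fderiv ℝ (V ((0 : ℝ), (1 : ℝ))) y₀ (V ((1 : ℝ), (0 : ℝ)) y₀)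
        - fderiv ℝ (V ((1 : ℝ), (0 : ℝ))) y₀ (V ((0 : ℝ), (1 : ℝ)) y₀)
    let ω : ℝ × ℝ → ℝ × ℝ → ℝ :=
      fun e y => π (M ((fderiv ℝ (fun x => f y x) y₀).inverse e))
    (∀ y ∈ D,
      fderiv ℝ (ω ((1 : ℝ), (0 : ℝ))) y ((0 : ℝ), (1 : ℝ))
          - fderiv ℝ (ω ((0 : ℝ), (1 : ℝ))) y ((1 : ℝ), (0 : ℝ)) =
        LinearMap.det ((fderiv ℝ (fun x => f y x) y₀).inverse).toLinearMap * π (M Y₀)) ∧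
    (π (M Y₀) = 0 → ∀ y ∈ D,
      fderiv ℝ (ω ((1 : ℝ), (0 : ℝ))) y ((0 : ℝ), (1 : ℝ))
          - fderiv ℝ (ω ((0 : ℝ), (1 : ℝ))) y ((1 : ℝ), (0 : ℝ)) = 0) :=
  stmt_9_general k hk D hDopen f y₀ hy₀ hassoc hone_mul hmul_one inv hinv_mem hinv_mul hf_smooth M π
    hπ
end

section
/- Let M be the linear map of ℝ² whose matrix in the canonical basis is ((π₂(Y₀), −π₁(Y₀)), (π₁(Y₀), π₂(Y₀))), and suppose g₁ : D → ℝ is a differentiable function whose differential at every y ∈ D is the linear form a ↦ π₁(M · (J₂f(y, y₀))⁻¹ · a). Then the ℝ-valued 1-form ω on D defined by ω(y)(a) := e^{g₁(y)} π₂(M · (J₂f(y, y₀))⁻¹ · a) is closed, i.e. for every y ∈ D, ∂_{e₂}[y ↦ ω(y)(e₁)](y) − ∂_{e₁}[y ↦ ω(y)(e₂)](y) = 0, where ∂_{e_j} denotes the directional derivative in the direction e_j. -/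
/-!
The form `θ y = J₂f(y, y₀)⁻¹` is the Maurer–Cartan form of the group. Differentiating the left
invariance `J₂f(z ⋆ x, y₀) = D(z ⋆ ·)(x) ∘ J₂f(x, y₀)` in `x` at `y₀` and using the symmetry of
second derivatives gives the Maurer–Cartan equation `dθ(a, b) = -[θ a, θ b]`, where `[·, ·]` is the
bracket of left-invariant vector fields at `y₀`; in the plane `[v, w] = det(v, w) Y₀`. With
`ℓ = ⟨Y₀, ·⟩` and `m = ⟨J Y₀, ·⟩` (`J` the rotation by `-π/2`) we have `ω = e^{g₁} ℓ ∘ θ` and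
`dg₁ = m ∘ θ`, so `dω = e^{g₁} (dg₁ ∧ ℓ θ + ℓ dθ) = e^{g₁} (|Y₀|² - |Y₀|²) θ¹ ∧ θ² = 0`.
-/

open ContinuousLinearMap

variable {E : Type*} [NormedAddCommGroup E] [NormedSpace ℝ E]

theorem ContinuousLinearMap.isInvertible_of_comp_eq_id {𝕜 V : Type*} [NontriviallyNormedField 𝕜]
    [CompleteSpace 𝕜] [NormedAddCommGroup V] [NormedSpace 𝕜 V] [FiniteDimensional 𝕜 V]
    {A C : V →L[𝕜] V} (h : C.comp A = .id 𝕜 V) : A.IsInvertible := by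
  have hinj : Function.Injective A := Function.LeftInverse.injective (g := C) fun x => congr($h x)
  have := FiniteDimensional.complete 𝕜 V
  obtain ⟨u, hu⟩ := A.isUnit_iff_bijective.mpr ⟨hinj, LinearMap.injective_iff_surjective.mp hinj⟩
  exact ⟨ContinuousLinearEquiv.unitsEquiv 𝕜 V u, by ext; simp [← hu]⟩

theorem hasFDerivAt_inverse_apply {X : Type*} [NormedAddCommGroup X] [NormedSpace ℝ X]
    [CompleteSpace E] {L : X → E →L[ℝ] E} {y : X}
    (hL : DifferentiableAt ℝ L y) (hy : (L y).IsInvertible) (e : E) :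
    HasFDerivAt (fun w => (L w).inverse e)
      (-((L y).inverse.comp ((fderiv ℝ L y).flip ((L y).inverse e)))) y := by
  obtain ⟨A, hA⟩ := hy
  set u := (ContinuousLinearEquiv.unitsEquiv ℝ E).symm A
  have hu : (u : E →L[ℝ] E) = L y := hA
  have hinv : HasFDerivAt (fun w => Ring.inverse (L w))
      ((-mulLeftRight ℝ (E →L[ℝ] E) ↑u⁻¹ ↑u⁻¹).comp (fderiv ℝ L y)) y :=
    (hu ▸ hasFDerivAt_ringInverse u).comp y hL.hasFDerivAt
  have hinv' := hinv.clm_apply (hasFDerivAt_const e y)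
  simp only [← ringInverse_eq_inverse] at hinv' ⊢
  convert hinv' using 1
  ext a
  simp [← hu]

theorem ContinuousLinearMap.apply_sub_apply_swap_prod {F : Type*} [NormedAddCommGroup F]
    [NormedSpace ℝ F] (T : ℝ × ℝ →L[ℝ] ℝ × ℝ →L[ℝ] F) (v w : ℝ × ℝ) :
    T v w - T w v = (v.1 * w.2 - v.2 * w.1) • (T (1, 0) (0, 1) - T (0, 1) (1, 0)) := by
  have hdecomp (u : ℝ × ℝ) : u = u.1 • ((1 : ℝ), (0 : ℝ)) + u.2 • ((0 : ℝ), (1 : ℝ)) := by simp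
  rw [hdecomp v, hdecomp w]
  simp only [map_add, map_smul, add_apply, smul_apply, Prod.fst_add, Prod.snd_add, Prod.smul_fst,
    Prod.smul_snd, smul_eq_mul]
  module

theorem fderiv_exp_mul_dot_apply {g : E → ℝ} {φ : E → ℝ × ℝ} {y : E} (c : ℝ × ℝ)
    (hg : DifferentiableAt ℝ g y) (hφ : DifferentiableAt ℝ φ y) (a : E) :
    fderiv ℝ (fun w => Real.exp (g w) * (c.1 * (φ w).1 + c.2 * (φ w).2)) y a =
      Real.exp (g y) * (fderiv ℝ g y a * (c.1 * (φ y).1 + c.2 * (φ y).2)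
        + (c.1 * (fderiv ℝ φ y a).1 + c.2 * (fderiv ℝ φ y a).2)) := by
  have hdot := (hφ.hasFDerivAt.fst.const_mul c.1).fun_add (hφ.hasFDerivAt.snd.const_mul c.2)
  rw [(hg.hasFDerivAt.exp.fun_mul hdot).fderiv]
  simp only [smul_add, add_apply, smul_apply, comp_apply, coe_fst', smul_eq_mul, coe_snd']
  ring

structure IsC2MonoidLawOn (D : Set E) (f : E → E → E) (y₀ : E) : Prop where
  isOpen : IsOpen D
  one_mem : y₀ ∈ D
  assoc : ∀ a ∈ D, ∀ b ∈ D, ∀ c ∈ D, f (f a b) c = f a (f b c)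
  one_mul : ∀ a ∈ D, f y₀ a = a
  mul_one : ∀ a ∈ D, f a y₀ = a
  contDiffOn : ContDiffOn ℝ 2 (fun p : E × E => f p.1 p.2) (D ×ˢ D)

/-- `leftFrame f y₀ z = J₂f(z, y₀)`: its value on `u` is the left-invariant vector field
`V(u)` at `z`. -/
noncomputable def leftFrame (f : E → E → E) (y₀ z : E) : E →L[ℝ] E := fderiv ℝ (f z) y₀

noncomputable def lieBracketAtOne (f : E → E → E) (y₀ v w : E) : E :=
  fderiv ℝ (leftFrame f y₀) y₀ v w - fderiv ℝ (leftFrame f y₀) y₀ w v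

namespace IsC2MonoidLawOn

variable {D : Set E} {f : E → E → E} {y₀ y z x : E}

theorem contDiffAt_uncurry (h : IsC2MonoidLawOn D f y₀) (hz : z ∈ D) (hx : x ∈ D) :
    ContDiffAt ℝ 2 (Function.uncurry f) (z, x) :=
  h.contDiffOn.contDiffAt ((h.isOpen.prod h.isOpen).mem_nhds ⟨hz, hx⟩)

theorem contDiffAt (h : IsC2MonoidLawOn D f y₀) (hz : z ∈ D) (hx : x ∈ D) :
    ContDiffAt ℝ 2 (f z) x :=
  (h.contDiffAt_uncurry hz hx).comp x (contDiffAt_const.prodMk contDiffAt_id)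

theorem hasFDerivAt (h : IsC2MonoidLawOn D f y₀) (hz : z ∈ D) (hx : x ∈ D) :
    HasFDerivAt (f z) (fderiv ℝ (f z) x) x :=
  ((h.contDiffAt hz hx).differentiableAt two_ne_zero).hasFDerivAt

theorem differentiableAt_leftFrame (h : IsC2MonoidLawOn D f y₀) (hz : z ∈ D) :
    DifferentiableAt ℝ (leftFrame f y₀) z :=
  ((h.contDiffAt_uncurry hz h.one_mem).fderiv (m := 1) contDiffAt_const le_rfl).differentiableAt
    one_ne_zero

theorem leftFrame_one (h : IsC2MonoidLawOn D f y₀) : leftFrame f y₀ y₀ = .id ℝ E := by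
  have hfy₀ : f y₀ =ᶠ[nhds y₀] id := by
    filter_upwards [h.isOpen.mem_nhds h.one_mem] with t ht using h.one_mul t ht
  rw [leftFrame, hfy₀.fderiv_eq, fderiv_id]

theorem leftFrame_mul (h : IsC2MonoidLawOn D f y₀) (hz : z ∈ D) (hx : x ∈ D) :
    leftFrame f y₀ (f z x) = (fderiv ℝ (f z) x).comp (leftFrame f y₀ x) := by
  have hassoc : f (f z x) =ᶠ[nhds y₀] fun t => f z (f x t) := by
    filter_upwards [h.isOpen.mem_nhds h.one_mem] with t ht using h.assoc z hz x hx t ht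
  have hfz : HasFDerivAt (f z) (fderiv ℝ (f z) x) (f x y₀) := by
    rw [h.mul_one x hx]; exact h.hasFDerivAt hz hx
  exact hassoc.fderiv_eq.trans (hfz.comp y₀ (h.hasFDerivAt hx h.one_mem)).fderiv

theorem fderiv_leftFrame_leftFrame (h : IsC2MonoidLawOn D f y₀) (hy : y ∈ D) (v w : E) :
    fderiv ℝ (leftFrame f y₀) y (leftFrame f y₀ y v) w =
      leftFrame f y₀ y (fderiv ℝ (leftFrame f y₀) y₀ v w) + fderiv ℝ (fderiv ℝ (f y)) y₀ v w := by
  have hL : HasFDerivAt (leftFrame f y₀) (fderiv ℝ (leftFrame f y₀) y) (f y y₀) := by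
    rw [h.mul_one y hy]; exact (h.differentiableAt_leftFrame hy).hasFDerivAt
  have hdfy : HasFDerivAt (fderiv ℝ (f y)) (fderiv ℝ (fderiv ℝ (f y)) y₀) y₀ :=
    (((h.contDiffAt hy h.one_mem).fderiv_right le_rfl).differentiableAt one_ne_zero).hasFDerivAt
  have hcomp := hdfy.clm_comp (h.differentiableAt_leftFrame h.one_mem).hasFDerivAt
  have hmul : (fun x => (fderiv ℝ (f y) x).comp (leftFrame f y₀ x)) =ᶠ[nhds y₀]
      fun x => leftFrame f y₀ (f y x) := by
    filter_upwards [h.isOpen.mem_nhds h.one_mem] with x hx using (h.leftFrame_mul hy hx).symm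
  have hderiv := (hL.comp y₀ (h.hasFDerivAt hy h.one_mem)).unique
    (hcomp.congr_of_eventuallyEq hmul.symm)
  have happ := congr($hderiv v w)
  simp only [h.leftFrame_one] at happ
  exact happ

theorem fderiv_leftFrame_sub (h : IsC2MonoidLawOn D f y₀) (hy : y ∈ D) (v w : E) :
    fderiv ℝ (leftFrame f y₀) y (leftFrame f y₀ y v) w
        - fderiv ℝ (leftFrame f y₀) y (leftFrame f y₀ y w) v =
      leftFrame f y₀ y (lieBracketAtOne f y₀ v w) := by
  have hsymm : fderiv ℝ (fderiv ℝ (f y)) y₀ v w = fderiv ℝ (fderiv ℝ (f y)) y₀ w v :=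
    (h.contDiffAt hy h.one_mem).isSymmSndFDerivAt
      (by simp [minSmoothness_of_isRCLikeNormedField]) v w
  rw [h.fderiv_leftFrame_leftFrame hy, h.fderiv_leftFrame_leftFrame hy, lieBracketAtOne, map_sub,
    hsymm]
  abel

theorem isInvertible_leftFrame [FiniteDimensional ℝ E] (h : IsC2MonoidLawOn D f y₀) (hy : y ∈ D)
    (hz : z ∈ D) (hzy : f z y = y₀) : (leftFrame f y₀ y).IsInvertible := by
  refine isInvertible_of_comp_eq_id (C := fderiv ℝ (f z) y) ?_
  rw [← h.leftFrame_mul hz hy, hzy, h.leftFrame_one]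

theorem maurerCartan [FiniteDimensional ℝ E] (h : IsC2MonoidLawOn D f y₀) (hy : y ∈ D)
    (hz : z ∈ D) (hzy : f z y = y₀) (a b : E) :
    fderiv ℝ (fun w => (leftFrame f y₀ w).inverse b) y a
        - fderiv ℝ (fun w => (leftFrame f y₀ w).inverse a) y b =
      -lieBracketAtOne f y₀ ((leftFrame f y₀ y).inverse a) ((leftFrame f y₀ y).inverse b) := by
  have hinv := h.isInvertible_leftFrame hy hz hzy
  have hL := h.differentiableAt_leftFrame hy
  have hstr := h.fderiv_leftFrame_sub hy ((leftFrame f y₀ y).inverse a)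
    ((leftFrame f y₀ y).inverse b)
  rw [hinv.self_apply_inverse, hinv.self_apply_inverse] at hstr
  rw [(hasFDerivAt_inverse_apply hL hinv b).fderiv, (hasFDerivAt_inverse_apply hL hinv a).fderiv]
  simp only [neg_apply, coe_comp, Function.comp_apply, flip_apply]
  rw [← neg_sub', ← map_sub, hstr, hinv.inverse_apply_self]

theorem lieBracket_leftFrame_one (h : IsC2MonoidLawOn D f y₀) (v w : E) :
    fderiv ℝ (fun z => leftFrame f y₀ z w) y₀ (leftFrame f y₀ y₀ v)
        - fderiv ℝ (fun z => leftFrame f y₀ z v) y₀ (leftFrame f y₀ y₀ w) =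
      lieBracketAtOne f y₀ v w := by
  have hL := h.differentiableAt_leftFrame h.one_mem
  simp [fderiv_clm_apply hL (differentiableAt_const _), h.leftFrame_one, lieBracketAtOne]

end IsC2MonoidLawOn

theorem lieBracketAtOne_eq_det_smul (f : ℝ × ℝ → ℝ × ℝ → ℝ × ℝ) (y₀ v w : ℝ × ℝ) :
    lieBracketAtOne f y₀ v w = (v.1 * w.2 - v.2 * w.1) • lieBracketAtOne f y₀ (1, 0) (0, 1) :=
  apply_sub_apply_swap_prod _ v w

theorem stmt_10_general
    (k : ℕ) (hk : 2 ≤ k)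
    (D : Set (ℝ × ℝ)) (hDopen : IsOpen D)
    (f : ℝ × ℝ → ℝ × ℝ → ℝ × ℝ) (y₀ : ℝ × ℝ) (hy₀ : y₀ ∈ D)
    (hassoc : ∀ a ∈ D, ∀ b ∈ D, ∀ c ∈ D, f (f a b) c = f a (f b c))
    (hone_mul : ∀ a ∈ D, f y₀ a = a)
    (hmul_one : ∀ a ∈ D, f a y₀ = a)
    (inv : ℝ × ℝ → ℝ × ℝ)
    (hinv_mem : ∀ a ∈ D, inv a ∈ D)
    (hinv_mul : ∀ a ∈ D, f (inv a) a = y₀)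
    (hf_smooth : ContDiffOn ℝ k (fun p : (ℝ × ℝ) × (ℝ × ℝ) => f p.1 p.2) (D ×ˢ D))
    (g₁ : ℝ × ℝ → ℝ)
    (hg₁ : ∀ y ∈ D, DifferentiableAt ℝ g₁ y ∧
      ∀ a : ℝ × ℝ, fderiv ℝ g₁ y a =
        (let V : ℝ × ℝ → ℝ × ℝ → ℝ × ℝ := fun u y => fderiv ℝ (fun x => f y x) y₀ u
         let Y₀ : ℝ × ℝ :=
           fderiv ℝ (V ((0 : ℝ), (1 : ℝ))) y₀ (V ((1 : ℝ), (0 : ℝ)) y₀)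
             - fderiv ℝ (V ((1 : ℝ), (0 : ℝ))) y₀ (V ((0 : ℝ), (1 : ℝ)) y₀)
         let M : ℝ × ℝ → ℝ × ℝ :=
           fun b => (Y₀.2 * b.1 - Y₀.1 * b.2, Y₀.1 * b.1 + Y₀.2 * b.2)
         (M ((fderiv ℝ (fun x => f y x) y₀).inverse a)).1)) :
    let V : ℝ × ℝ → ℝ × ℝ → ℝ × ℝ := fun u y => fderiv ℝ (fun x => f y x) y₀ u
    let Y₀ : ℝ × ℝ :=
      fderiv ℝ (V ((0 : ℝ), (1 : ℝ))) y₀ (V ((1 : ℝ), (0 : ℝ)) y₀)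
        - fderiv ℝ (V ((1 : ℝ), (0 : ℝ))) y₀ (V ((0 : ℝ), (1 : ℝ)) y₀)
    let M : ℝ × ℝ → ℝ × ℝ := fun b => (Y₀.2 * b.1 - Y₀.1 * b.2, Y₀.1 * b.1 + Y₀.2 * b.2)
    let ω : ℝ × ℝ → ℝ × ℝ → ℝ :=
      fun e y => Real.exp (g₁ y) * (M ((fderiv ℝ (fun x => f y x) y₀).inverse e)).2
    ∀ y ∈ D,
      fderiv ℝ (ω ((1 : ℝ), (0 : ℝ))) y ((0 : ℝ), (1 : ℝ))
          - fderiv ℝ (ω ((0 : ℝ), (1 : ℝ))) y ((1 : ℝ), (0 : ℝ)) = 0 := by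
  intro V Y₀ M ω y hy
  have hG : IsC2MonoidLawOn D f y₀ :=
    ⟨hDopen, hy₀, hassoc, hone_mul, hmul_one, hf_smooth.of_le (by exact_mod_cast hk)⟩
  have hY₀ : Y₀ = lieBracketAtOne f y₀ (1, 0) (0, 1) := hG.lieBracket_leftFrame_one _ _
  set B := (leftFrame f y₀ y).inverse
  set θ : ℝ × ℝ → ℝ × ℝ → ℝ × ℝ := fun e w => (leftFrame f y₀ w).inverse e
  have hθ : ∀ e, DifferentiableAt ℝ (θ e) y := fun e =>
    (hasFDerivAt_inverse_apply (hG.differentiableAt_leftFrame hy)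
      (hG.isInvertible_leftFrame hy (hinv_mem y hy) (hinv_mul y hy)) e).differentiableAt
  have hdg : ∀ a, fderiv ℝ g₁ y a = Y₀.2 * (B a).1 - Y₀.1 * (B a).2 := (hg₁ y hy).2
  have hdω : ∀ e a, fderiv ℝ (ω e) y a = Real.exp (g₁ y) *
      (fderiv ℝ g₁ y a * (Y₀.1 * (B e).1 + Y₀.2 * (B e).2)
        + (Y₀.1 * (fderiv ℝ (θ e) y a).1 + Y₀.2 * (fderiv ℝ (θ e) y a).2)) := fun e a =>
    fderiv_exp_mul_dot_apply Y₀ (hg₁ y hy).1 (hθ e) a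
  have hMC := hG.maurerCartan hy (hinv_mem y hy) (hinv_mul y hy) (0, 1) (1, 0)
  rw [lieBracketAtOne_eq_det_smul, ← hY₀] at hMC
  have hMC₁ := congr($hMC.1)
  have hMC₂ := congr($hMC.2)
  simp only [Prod.fst_sub, Prod.snd_sub, Prod.fst_neg, Prod.snd_neg, Prod.smul_fst, Prod.smul_snd,
    smul_eq_mul] at hMC₁ hMC₂
  rw [hdω, hdω, hdg, hdg]
  linear_combination (Real.exp (g₁ y) * Y₀.1) * hMC₁ + (Real.exp (g₁ y) * Y₀.2) * hMC₂

/-- with `M` built from `Y₀` as in Lemma 4.4, if `g₁ : D → ℝ` has differential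
`a ↦ π₁(M (J₂f(y,y₀))⁻¹ a)` at every `y ∈ D`, then the 1-form
`ω(y)(a) = e^{g₁(y)} π₂(M (J₂f(y,y₀))⁻¹ a)` is closed on `D`. -/
theorem stmt_10
    (k : ℕ) (hk : 2 ≤ k)
    (D : Set (ℝ × ℝ)) (hDopen : IsOpen D) (hDconn : IsConnected D)
    (hDsc : SimplyConnectedSpace D)
    (f : ℝ × ℝ → ℝ × ℝ → ℝ × ℝ) (y₀ : ℝ × ℝ) (hy₀ : y₀ ∈ D)
    (hmul : ∀ a ∈ D, ∀ b ∈ D, f a b ∈ D)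
    (hassoc : ∀ a ∈ D, ∀ b ∈ D, ∀ c ∈ D, f (f a b) c = f a (f b c))
    (hone_mul : ∀ a ∈ D, f y₀ a = a)
    (hmul_one : ∀ a ∈ D, f a y₀ = a)
    (inv : ℝ × ℝ → ℝ × ℝ)
    (hinv_mem : ∀ a ∈ D, inv a ∈ D)
    (hmul_inv : ∀ a ∈ D, f a (inv a) = y₀)
    (hinv_mul : ∀ a ∈ D, f (inv a) a = y₀)
    (hf_smooth : ContDiffOn ℝ k (fun p : (ℝ × ℝ) × (ℝ × ℝ) => f p.1 p.2) (D ×ˢ D))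
    (hinv_smooth : ContDiffOn ℝ k inv D)
    (g₁ : ℝ × ℝ → ℝ)
    (hg₁ : ∀ y ∈ D, DifferentiableAt ℝ g₁ y ∧
      ∀ a : ℝ × ℝ, fderiv ℝ g₁ y a =
        (let V : ℝ × ℝ → ℝ × ℝ → ℝ × ℝ := fun u y => fderiv ℝ (fun x => f y x) y₀ u
         let Y₀ : ℝ × ℝ :=
           fderiv ℝ (V ((0 : ℝ), (1 : ℝ))) y₀ (V ((1 : ℝ), (0 : ℝ)) y₀)
             - fderiv ℝ (V ((1 : ℝ), (0 : ℝ))) y₀ (V ((0 : ℝ), (1 : ℝ)) y₀)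
         let M : ℝ × ℝ → ℝ × ℝ :=
           fun b => (Y₀.2 * b.1 - Y₀.1 * b.2, Y₀.1 * b.1 + Y₀.2 * b.2)
         (M ((fderiv ℝ (fun x => f y x) y₀).inverse a)).1)) :
    let V : ℝ × ℝ → ℝ × ℝ → ℝ × ℝ := fun u y => fderiv ℝ (fun x => f y x) y₀ u
    let Y₀ : ℝ × ℝ :=
      fderiv ℝ (V ((0 : ℝ), (1 : ℝ))) y₀ (V ((1 : ℝ), (0 : ℝ)) y₀)
        - fderiv ℝ (V ((1 : ℝ), (0 : ℝ))) y₀ (V ((0 : ℝ), (1 : ℝ)) y₀)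
    let M : ℝ × ℝ → ℝ × ℝ := fun b => (Y₀.2 * b.1 - Y₀.1 * b.2, Y₀.1 * b.1 + Y₀.2 * b.2)
    let ω : ℝ × ℝ → ℝ × ℝ → ℝ :=
      fun e y => Real.exp (g₁ y) * (M ((fderiv ℝ (fun x => f y x) y₀).inverse e)).2
    ∀ y ∈ D,
      fderiv ℝ (ω ((1 : ℝ), (0 : ℝ))) y ((0 : ℝ), (1 : ℝ))
          - fderiv ℝ (ω ((0 : ℝ), (1 : ℝ))) y ((1 : ℝ), (0 : ℝ)) = 0 :=
  stmt_10_general k hk D hDopen f y₀ hy₀ hassoc hone_mul hmul_one inv hinv_mem hinv_mul hf_smooth g₁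
    hg₁
end

section
/- For every y ∈ ℝ² and every neighborhood V of (0, 0) in ℝ², there exist an integer n ≥ 1 and an element z ∈ V such that y equals the n-fold T-product z T z T ⋯ T z (n factors). In particular, every neighborhood of the identity generates the group (ℝ², T). -/
/-!
The `n`-th `T`-power of `z = (a, b)` is `(n a, b (1 + e^a + ⋯ + e^{(n-1)a}))`. Taking
`a = y₁ / n` makes the first coordinate `y₁`, and every term of the geometric sum is then at
least `e^{-|y₁|}`, so the sum grows linearly in `n` and `b = y₂ / sum` tends to `0`. Hence for
large `n` the `n`-th root `(a, b)` of `y` lies in any given neighbourhood of the identity.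
-/

open Real Filter Topology Finset

lemma iterate_mulLeft_zero (z : ℝ × ℝ) (n : ℕ) :
    (fun w : ℝ × ℝ => (z.1 + w.1, z.2 + exp z.1 * w.2))^[n] (0, 0)
      = (n * z.1, z.2 * ∑ k ∈ range n, exp z.1 ^ k) := by
  induction n with
  | zero => simp
  | succ n ih =>
    rw [Function.iterate_succ_apply', ih, geom_sum_succ]
    ext <;> push_cast <;> ring

lemma natCast_mul_exp_neg_abs_le_geom_sum (x : ℝ) (n : ℕ) :
    n * exp (-|x|) ≤ ∑ k ∈ range n, exp (x / n) ^ k := by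
  calc (n : ℝ) * exp (-|x|) = ∑ _k ∈ range n, exp (-|x|) := by simp
    _ ≤ ∑ k ∈ range n, exp (x / n) ^ k := by
      refine sum_le_sum fun k hk => ?_
      have hkn : (k : ℝ) ≤ n := by exact_mod_cast (mem_range.1 hk).le
      have hn : (n : ℝ) ≠ 0 := Nat.cast_ne_zero.2 (by have := mem_range.1 hk; omega)
      rw [← exp_nat_mul, exp_le_exp]
      calc -|x| = -(n * (|x| / n)) := by rw [mul_div_cancel₀ _ hn]
        _ ≤ -(k * (|x| / n)) := neg_le_neg (by gcongr)
        _ = -|k * (x / n)| := by rw [abs_mul, abs_div, Nat.abs_cast, Nat.abs_cast]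
        _ ≤ k * (x / n) := neg_abs_le _

lemma tendsto_geom_sum_exp_div_atTop (x : ℝ) :
    Tendsto (fun n : ℕ => ∑ k ∈ range n, exp (x / n) ^ k) atTop atTop :=
  tendsto_atTop_mono (natCast_mul_exp_neg_abs_le_geom_sum x)
    (tendsto_natCast_atTop_atTop.atTop_mul_const (exp_pos _))

/-- for every `y ∈ ℝ²` and every neighborhood `V` of `(0,0)`, there are `n ≥ 1`
and `z ∈ V` such that `y` is the `n`-fold `T`-product `z T z T ⋯ T z`; hence every neighborhood
of the identity generates the group `(ℝ², T)`. -/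
theorem stmt_11
    (y : ℝ × ℝ) (V : Set (ℝ × ℝ)) (hV : V ∈ nhds ((0 : ℝ), (0 : ℝ))) :
    ∃ n : ℕ, 1 ≤ n ∧ ∃ z ∈ V,
      (fun w : ℝ × ℝ => (z.1 + w.1, z.2 + Real.exp z.1 * w.2))^[n] ((0 : ℝ), (0 : ℝ)) = y := by
  set root : ℕ → ℝ × ℝ := fun n => (y.1 / n, y.2 / ∑ k ∈ range n, exp (y.1 / n) ^ k)
  have h_root : Tendsto root atTop (𝓝 (0, 0)) :=
    (tendsto_const_div_atTop_nhds_zero_nat y.1).prodMk_nhds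
      (tendsto_const_nhds.div_atTop (tendsto_geom_sum_exp_div_atTop y.1))
  obtain ⟨n, hn_mem, hn⟩ := ((h_root.eventually hV).and (eventually_ge_atTop 1)).exists
  refine ⟨n, hn, root n, hn_mem, ?_⟩
  have hn0 : (n : ℝ) ≠ 0 := Nat.cast_ne_zero.2 (by omega)
  have hsum : ∑ k ∈ range n, exp (y.1 / n) ^ k ≠ 0 :=
    (sum_pos (fun k _ => pow_pos (exp_pos _) k) (nonempty_range_iff.2 (by omega))).ne'
  rw [iterate_mulLeft_zero]
  ext <;> simp only [root] <;> field_simp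
end

section
/- The set of homeomorphisms h : I → I such that for every t ≥ 0 the pushforward of μ_t under h equals μ_t contains at most two elements: the identity map and at most one decreasing homeomorphism. In particular this set is finite (hence discrete). -/
/-!
A continuous bijection of an interval is strictly monotone or strictly antitone. The distribution
functions `x ↦ μ_t (-∞, x]` jointly separate the points of `I`, because full support leaves no
subinterval that is null for every `μ_t`. An increasing invariant `h` preserves them,
`μ_t (-∞, h x] = μ_t (-∞, x]`, hence fixes every point. Invariant maps are closed under
composition, so for two decreasing invariant maps `h, g` both `h ∘ g` and `g ∘ g` are the
identity on `I`, which forces `h = g` there.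
-/

open MeasureTheory Set

theorem ContinuousOn.strictMonoOn_or_strictAntiOn_of_injOn {α δ : Type*}
    [ConditionallyCompleteLinearOrder α] [DenselyOrdered α] [TopologicalSpace α] [OrderTopology α]
    [LinearOrder δ] [TopologicalSpace δ] [OrderClosedTopology δ]
    {s : Set α} (hs : s.OrdConnected) {f : α → δ} (hf_c : ContinuousOn f s) (hf_i : InjOn f s) :
    StrictMonoOn f s ∨ StrictAntiOn f s := by
  rcases s.eq_empty_or_nonempty with rfl | ⟨x, hx⟩
  · exact .inl (subsingleton_empty.strictMonoOn f)
  have : Inhabited s := ⟨⟨x, hx⟩⟩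
  exact (Continuous.strictMono_of_inj hf_c.domRestrict hf_i.injective).imp
    strictMono_domRestrict.mp strictAntiOn_iff_strictAnti.mpr

namespace MeasureTheory.Measure

variable {α : Type*} [MeasurableSpace α]

theorem aemeasurable_of_map_eq_self {ν : Measure α} {f : α → α} (hf : ν.map f = ν) :
    AEMeasurable f ν := by
  rcases eq_or_ne ν 0 with rfl | hν
  · exact aemeasurable_zero_measure
  · exact .of_map_ne_zero (by rwa [hf])

theorem map_comp_eq_self {ν : Measure α} {f g : α → α} (hf : ν.map f = ν) (hg : ν.map g = ν) :
    ν.map (g ∘ f) = ν := by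
  have hg' : AEMeasurable g (ν.map f) := by rw [hf]; exact aemeasurable_of_map_eq_self hg
  rw [← hg'.map_map_of_aemeasurable (aemeasurable_of_map_eq_self hf), hf, hg]

end MeasureTheory.Measure

open Measure

section InvariantMaps

variable {ι : Type*} {μ : ι → Measure ℝ} {I : Set ℝ}

theorem exists_measure_Ioo_ne_zero (hI : I.OrdConnected)
    (hfull : ∀ z ∈ I, ∀ ε > (0 : ℝ), ∃ i, 0 < μ i (Ioo (z - ε) (z + ε) ∩ I))
    {a b : ℝ} (ha : a ∈ I) (hb : b ∈ I) (hab : a < b) : ∃ i, μ i (Ioo a b) ≠ 0 := by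
  obtain ⟨i, hi⟩ := hfull ((a + b) / 2) (hI.out ha hb ⟨by linarith, by linarith⟩)
    ((b - a) / 2) (by linarith)
  refine ⟨i, (hi.trans_le (measure_mono ?_)).ne'⟩
  rw [show (a + b) / 2 - (b - a) / 2 = a by ring, show (a + b) / 2 + (b - a) / 2 = b by ring]
  exact inter_subset_left

theorem strictMonoOn_measure_Iic [∀ i, IsFiniteMeasure (μ i)]
    (hμ : ∀ a ∈ I, ∀ b ∈ I, a < b → ∃ i, μ i (Ioo a b) ≠ 0) :
    StrictMonoOn (fun x i ↦ μ i (Iic x)) I := by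
  intro a ha b hb hab
  refine lt_of_le_of_ne (fun i ↦ measure_mono (Iic_subset_Iic.2 hab.le)) fun heq ↦ ?_
  obtain ⟨i, hi⟩ := hμ a ha b hb hab
  refine hi (measure_mono_null Ioo_subset_Ioc_self ?_)
  rw [← Iic_sdiff_Iic, measure_sdiff (Iic_subset_Iic.2 hab.le) nullMeasurableSet_Iic
    (measure_ne_top _ _), show μ i (Iic a) = μ i (Iic b) from congrFun heq i, tsub_self]

theorem measure_Iic_apply_eq_of_strictMonoOn {ν : Measure ℝ} (hI : ν Iᶜ = 0) {h : ℝ → ℝ}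
    (hmono : StrictMonoOn h I) (hmap : ν.map h = ν) {x : ℝ} (hx : x ∈ I) :
    ν (Iic (h x)) = ν (Iic x) := by
  have hpre : h ⁻¹' Iic (h x) ∩ I = Iic x ∩ I := by
    ext y
    simp only [mem_inter_iff, mem_preimage, mem_Iic, and_congr_left_iff]
    exact fun hy ↦ hmono.le_iff_le hy hx
  calc ν (Iic (h x)) = ν.map h (Iic (h x)) := by rw [hmap]
    _ = ν (h ⁻¹' Iic (h x) ∩ I) := by
      rw [map_apply_of_aemeasurable (aemeasurable_of_map_eq_self hmap) measurableSet_Iic,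
        measure_inter_conull hI]
    _ = ν (Iic x) := by rw [hpre, measure_inter_conull hI]

variable [∀ i, IsFiniteMeasure (μ i)] (hsupp : ∀ i, μ i Iᶜ = 0)
  (hμ : ∀ a ∈ I, ∀ b ∈ I, a < b → ∃ i, μ i (Ioo a b) ≠ 0)
include hsupp hμ

theorem eqOn_id_of_strictMonoOn_of_map_eq {h : ℝ → ℝ} (hmaps : MapsTo h I I)
    (hmono : StrictMonoOn h I) (hmap : ∀ i, (μ i).map h = μ i) : EqOn h id I :=
  fun _ hx ↦ (strictMonoOn_measure_Iic hμ).injOn (hmaps hx) hx <|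
    funext fun i ↦ measure_Iic_apply_eq_of_strictMonoOn (hsupp i) hmono (hmap i) hx

theorem eqOn_of_strictAntiOn_of_map_eq {h g : ℝ → ℝ} (hh_maps : MapsTo h I I)
    (hg_maps : MapsTo g I I) (hh_anti : StrictAntiOn h I) (hg_anti : StrictAntiOn g I)
    (hh_map : ∀ i, (μ i).map h = μ i) (hg_map : ∀ i, (μ i).map g = μ i) : EqOn h g I := by
  have hgg : EqOn (g ∘ g) id I :=
    eqOn_id_of_strictMonoOn_of_map_eq hsupp hμ (hg_maps.comp hg_maps)
      (hg_anti.comp hg_anti hg_maps) fun i ↦ map_comp_eq_self (hg_map i) (hg_map i)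
  have hhg : EqOn (h ∘ g) id I :=
    eqOn_id_of_strictMonoOn_of_map_eq hsupp hμ (hh_maps.comp hg_maps)
      (hh_anti.comp hg_anti hg_maps) fun i ↦ map_comp_eq_self (hg_map i) (hh_map i)
  intro y hy
  calc h y = h (g (g y)) := by rw [show g (g y) = y from hgg hy]
    _ = g y := hhg (hg_maps hy)

end InvariantMaps

theorem stmt_13_general
    (I : Set ℝ) (hIconn : I.OrdConnected)
    (μ : ℝ → Measure ℝ)
    (hprob : ∀ t : ℝ, 0 ≤ t → IsProbabilityMeasure (μ t))
    (hsupp : ∀ t : ℝ, 0 ≤ t → μ t Iᶜ = 0)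
    (hfull : ∀ z ∈ I, ∀ ε > (0 : ℝ), ∃ t : ℝ, 0 ≤ t ∧
      0 < μ t (Set.Ioo (z - ε) (z + ε) ∩ I)) :
    ∃ h₀ : ℝ → ℝ,
      ∀ h : ℝ → ℝ,
        Set.BijOn h I I → ContinuousOn h I →
        (∀ t : ℝ, 0 ≤ t → Measure.map h (μ t) = μ t) →
        Set.EqOn h id I ∨ (StrictAntiOn h I ∧ Set.EqOn h h₀ I) := by
  let ν : Ici (0 : ℝ) → Measure ℝ := fun t ↦ μ t
  have : ∀ t, IsFiniteMeasure (ν t) := fun t ↦ have := hprob t t.2; inferInstance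
  have hsupp' : ∀ t, ν t Iᶜ = 0 := fun t ↦ hsupp t t.2
  have hν : ∀ a ∈ I, ∀ b ∈ I, a < b → ∃ t, ν t (Ioo a b) ≠ 0 := fun a ha b hb hab ↦
    exists_measure_Ioo_ne_zero hIconn (fun z hz ε hε ↦
      let ⟨t, ht, hpos⟩ := hfull z hz ε hε; ⟨⟨t, ht⟩, hpos⟩) ha hb hab
  by_cases hanti : ∃ g, MapsTo g I I ∧ StrictAntiOn g I ∧ ∀ t, (ν t).map g = ν t
  · obtain ⟨g, hg_maps, hg_anti, hg_map⟩ := hanti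
    refine ⟨g, fun h hbij hcont hmap ↦ ?_⟩
    rcases hcont.strictMonoOn_or_strictAntiOn_of_injOn hIconn hbij.injOn with hmono | hh_anti
    · exact .inl <| eqOn_id_of_strictMonoOn_of_map_eq hsupp' hν hbij.mapsTo hmono
        fun t ↦ hmap t t.2
    · exact .inr ⟨hh_anti, eqOn_of_strictAntiOn_of_map_eq hsupp' hν hbij.mapsTo hg_maps
        hh_anti hg_anti (fun t ↦ hmap t t.2) hg_map⟩
  · refine ⟨id, fun h hbij hcont hmap ↦ .inl ?_⟩
    rcases hcont.strictMonoOn_or_strictAntiOn_of_injOn hIconn hbij.injOn with hmono | hh_anti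
    · exact eqOn_id_of_strictMonoOn_of_map_eq hsupp' hν hbij.mapsTo hmono fun t ↦ hmap t t.2
    · exact absurd ⟨h, hbij.mapsTo, hh_anti, fun t ↦ hmap t t.2⟩ hanti

/-- the set of homeomorphisms `h` of the open interval `I` leaving every `μ_t`
invariant contains at most two elements: every such `h` coincides on `I` either with the
identity or with a single decreasing homeomorphism `h₀`; in particular this set is finite. -/
theorem stmt_13
    (I : Set ℝ) (hIopen : IsOpen I) (hIne : I.Nonempty) (hIconn : I.OrdConnected)
    (μ : ℝ → Measure ℝ)
    (hprob : ∀ t : ℝ, 0 ≤ t → IsProbabilityMeasure (μ t))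
    (hsupp : ∀ t : ℝ, 0 ≤ t → μ t Iᶜ = 0)
    (hfull : ∀ z ∈ I, ∀ ε > (0 : ℝ), ∃ t : ℝ, 0 ≤ t ∧
      0 < μ t (Set.Ioo (z - ε) (z + ε) ∩ I)) :
    ∃ h₀ : ℝ → ℝ,
      ∀ h : ℝ → ℝ,
        Set.BijOn h I I → ContinuousOn h I →
        (∀ t : ℝ, 0 ≤ t → Measure.map h (μ t) = μ t) →
        Set.EqOn h id I ∨ (StrictAntiOn h I ∧ Set.EqOn h h₀ I) :=
  stmt_13_general I hIconn μ hprob hsupp hfull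
end

section
/- Assume E is connected. If there exists y ∈ E such that y lies in the topological interior of S(y), then S(y₀) = E. -/
/-!
Write `S(y)` for the support of `t ↦ κ_t(y, ·)`. Self-similarity gives `S(y) = f_y(S(y₀))`, so
an interior point of `S(y)` yields `y₀ ∈ interior S(y₀)`. The set `S(y₀)` is always closed, and
it is stable under `(z, u) ↦ f_z(u)`: if `u ∈ S(y₀)` is charged at time `t₀`, then by weak
continuity and continuity of `c` every `w` near `z` charges a neighbourhood of `f_z(u)` at the
time `t₀ / c(z)`, and a time at which the chain from `y₀` charges such `w` can be followed by
`t₀ / c(z)` thanks to Chapman–Kolmogorov. Translating the neighbourhood of `y₀` by `f_z` then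
makes `S(y₀)` open, and connectedness finishes.
-/

open MeasureTheory Metric Filter Topology ProbabilityTheory Set

section MarginalSupport

variable {E : Type*} [MetricSpace E] [MeasurableSpace E]

def marginalSupport (μ : ℝ → Measure E) : Set E :=
  {z | ∀ ε > (0 : ℝ), ∃ t : ℝ, 0 ≤ t ∧ 0 < μ t (ball z ε)}

lemma exists_pos_of_mem_marginalSupport {μ : ℝ → Measure E} {z : E}
    (hz : z ∈ marginalSupport μ) {V : Set E} (hV : V ∈ 𝓝 z) : ∃ t, 0 ≤ t ∧ 0 < μ t V := by
  obtain ⟨ε, hε, hεV⟩ := Metric.mem_nhds_iff.mp hV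
  obtain ⟨t, ht, hpos⟩ := hz ε hε
  exact ⟨t, ht, hpos.trans_le (measure_mono hεV)⟩

lemma isClosed_marginalSupport (μ : ℝ → Measure E) : IsClosed (marginalSupport μ) := by
  refine isClosed_of_closure_subset fun z hz ε hε => ?_
  obtain ⟨z', hz', hdist⟩ := Metric.mem_closure_iff.mp hz (ε / 2) (half_pos hε)
  obtain ⟨t, ht, hpos⟩ := hz' (ε / 2) (half_pos hε)
  refine ⟨t, ht, hpos.trans_le (measure_mono (ball_subset_ball' ?_))⟩
  rw [dist_comm]
  linarith

lemma mapsTo_marginalSupport_of_eq_map [OpensMeasurableSpace E] {μ ν : ℝ → Measure E}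
    {φ ψ : E → E} {a : ℝ}
    (ha : 0 ≤ a) (hφ : Measurable φ) (hψ : Continuous ψ) (hψφ : Function.LeftInverse ψ φ)
    (hν : ∀ t, 0 ≤ t → ν t = (μ (a * t)).map φ) :
    MapsTo ψ (marginalSupport ν) (marginalSupport μ) := by
  intro z hz ε hε
  obtain ⟨t, ht, hpos⟩ := exists_pos_of_mem_marginalSupport hz
    ((isOpen_ball.preimage hψ).mem_nhds (mem_ball_self hε : ψ z ∈ ball (ψ z) ε))
  refine ⟨a * t, mul_nonneg ha ht, ?_⟩
  rwa [hν t ht, Measure.map_apply hφ (isOpen_ball.preimage hψ).measurableSet,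
    ← preimage_comp, hψφ.comp_eq_id, preimage_id] at hpos

end MarginalSupport

lemma eventually_measure_pos_of_tendsto_integral {E ι : Type*} [TopologicalSpace E]
    [MeasurableSpace E] [OpensMeasurableSpace E] [HasOuterApproxClosed E] {L : Filter ι}
    {μ : ι → Measure E} {ν : Measure E} [∀ i, IsProbabilityMeasure (μ i)]
    [IsProbabilityMeasure ν]
    (hμ : ∀ g : BoundedContinuousFunction E ℝ, Tendsto (fun i => ∫ x, g x ∂μ i) L (𝓝 (∫ x, g x ∂ν)))
    {U : Set E} (hU : IsOpen U) (hpos : 0 < ν U) : ∀ᶠ i in L, 0 < μ i U := by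
  have hlim : Tendsto (β := ProbabilityMeasure E) (fun i => ⟨μ i, inferInstance⟩) L
      (𝓝 ⟨ν, inferInstance⟩) :=
    ProbabilityMeasure.tendsto_iff_forall_integral_tendsto.mpr hμ
  exact eventually_lt_of_lt_liminf
    (hpos.trans_le (ProbabilityMeasure.le_liminf_measure_open_of_tendsto hlim hU))

lemma measure_pos_of_chapmanKolmogorov {E : Type*} [MeasurableSpace E]
    {κ : ℝ → Kernel E E}
    (hCK : ∀ t : ℝ, 0 ≤ t → ∀ s : ℝ, 0 ≤ s → ∀ y : E, ∀ A : Set E, MeasurableSet A →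
      κ (t + s) y A = ∫⁻ w, κ s w A ∂(κ t y))
    {t s : ℝ} (ht : 0 ≤ t) (hs : 0 ≤ s) {y : E} {A : Set E} (hA : MeasurableSet A)
    (hpos : 0 < κ t y {w | 0 < κ s w A}) : 0 < κ (t + s) y A := by
  rw [hCK t ht s hs y A hA, lintegral_pos_iff_support (Kernel.measurable_coe _ hA)]
  exact hpos.trans_le (measure_mono fun w hw => hw.ne')

section SelfSimilar

variable {E : Type*} [MetricSpace E] [MeasurableSpace E] [BorelSpace E]
  {κ : ℝ → Kernel E E} {y₀ : E} {f : E → E → E} {c : E → ℝ}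

lemma eventually_pos_of_selfSimilar [∀ t, IsMarkovKernel (κ t)]
    (hf : ∀ w, Measurable (f w)) (hc_cont : Continuous c) (hc_pos : ∀ y : E, 0 < c y)
    (hss : ∀ y : E, ∀ t : ℝ, 0 ≤ t → κ t y = Measure.map (f y) (κ (c y * t) y₀))
    (hweak : ∀ g : BoundedContinuousFunction E ℝ,
      ContinuousOn (fun t : ℝ => ∫ x, g x ∂(κ t y₀)) (Ici (0 : ℝ)))
    {z : E} {t₀ : ℝ} (ht₀ : 0 ≤ t₀) {V G : Set E} (hV : IsOpen V)
    (hVG : ∀ᶠ w in 𝓝 z, V ⊆ f w ⁻¹' G) (hpos : 0 < κ t₀ y₀ V) :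
    ∀ᶠ w in 𝓝 z, 0 < κ (t₀ / c z) w G := by
  have hs : 0 ≤ t₀ / c z := div_nonneg ht₀ (hc_pos z).le
  have htime : Tendsto (fun w => c w * (t₀ / c z)) (𝓝 z) (𝓝[Ici 0] t₀) := by
    refine tendsto_nhdsWithin_iff.mpr ⟨?_, .of_forall fun w => mul_nonneg (hc_pos w).le hs⟩
    simpa [mul_div_cancel₀ t₀ (hc_pos z).ne'] using
      (hc_cont.mul continuous_const).tendsto (x := z) (f := fun w => c w * (t₀ / c z))
  have hcharged : ∀ᶠ w in 𝓝 z, 0 < κ (c w * (t₀ / c z)) y₀ V :=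
    htime.eventually
      (eventually_measure_pos_of_tendsto_integral (fun g => hweak g t₀ ht₀) hV hpos)
  filter_upwards [hcharged, hVG] with w hw hwG
  rw [hss w _ hs]
  exact hw.trans_le ((measure_mono hwG).trans (Measure.le_map_apply (hf w).aemeasurable G))

lemma map_mem_marginalSupport [∀ t, IsMarkovKernel (κ t)]
    (hCK : ∀ t : ℝ, 0 ≤ t → ∀ s : ℝ, 0 ≤ s → ∀ y : E, ∀ A : Set E, MeasurableSet A →
      κ (t + s) y A = ∫⁻ w, κ s w A ∂(κ t y))
    (hf_cont : Continuous fun p : E × E => f p.1 p.2)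
    (hc_cont : Continuous c) (hc_pos : ∀ y : E, 0 < c y)
    (hss : ∀ y : E, ∀ t : ℝ, 0 ≤ t → κ t y = Measure.map (f y) (κ (c y * t) y₀))
    (hweak : ∀ g : BoundedContinuousFunction E ℝ,
      ContinuousOn (fun t : ℝ => ∫ x, g x ∂(κ t y₀)) (Ici (0 : ℝ)))
    {z u : E} (hz : z ∈ marginalSupport (κ · y₀)) (hu : u ∈ marginalSupport (κ · y₀)) :
    f z u ∈ marginalSupport (κ · y₀) := by
  intro ε hε
  obtain ⟨W, V, hW, hzW, hV, huV, hWV⟩ := mem_nhds_prod_iff'.mp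
    (hf_cont.continuousAt (x := (z, u)) (isOpen_ball.mem_nhds (mem_ball_self hε)))
  obtain ⟨t₀, ht₀, hpos₀⟩ := exists_pos_of_mem_marginalSupport hu (hV.mem_nhds huV)
  have hnear := eventually_pos_of_selfSimilar
    (fun w => (hf_cont.comp (Continuous.prodMk_right w)).measurable) hc_cont hc_pos hss hweak
    ht₀ hV (G := ball (f z u) ε)
    (eventually_of_mem (hW.mem_nhds hzW) fun w hw x hx => hWV (mk_mem_prod hw hx)) hpos₀
  obtain ⟨t₁, ht₁, hpos₁⟩ := exists_pos_of_mem_marginalSupport hz hnear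
  exact ⟨t₁ + t₀ / c z, add_nonneg ht₁ (div_nonneg ht₀ (hc_pos z).le),
    measure_pos_of_chapmanKolmogorov hCK ht₁ (div_nonneg ht₀ (hc_pos z).le) measurableSet_ball
      hpos₁⟩

end SelfSimilar

lemma isOpen_of_mem_interior_of_forall_mem {X : Type*} [TopologicalSpace X] {S : Set X}
    {x₀ : X} {f g : X → X → X} (hg : ∀ z, Continuous (g z)) (hfg : ∀ z x, f z (g z x) = x)
    (hg_self : ∀ z, g z z = x₀) (h₀ : x₀ ∈ interior S) (hS : ∀ z ∈ S, ∀ u ∈ S, f z u ∈ S) :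
    IsOpen S := by
  refine isOpen_iff_forall_mem_open.mpr fun z hz =>
    ⟨g z ⁻¹' interior S, fun x hx => ?_, isOpen_interior.preimage (hg z), ?_⟩
  · simpa only [hfg] using hS z hz _ (interior_subset hx)
  · rwa [mem_preimage, hg_self]

/-- for a self-similar Markov marginal family `(κ_t)` on a connected metric space
`E`, if some point `y` lies in the interior of its support set `S(y)`, then `S(y₀) = E`. -/
theorem stmt_14
    {E : Type*} [MetricSpace E] [ConnectedSpace E] [MeasurableSpace E] [BorelSpace E]
    (κ : ℝ → ProbabilityTheory.Kernel E E)
    (hMarkov : ∀ t : ℝ, ProbabilityTheory.IsMarkovKernel (κ t))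
    (hCK : ∀ t : ℝ, 0 ≤ t → ∀ s : ℝ, 0 ≤ s → ∀ y : E, ∀ A : Set E, MeasurableSet A →
      κ (t + s) y A = ∫⁻ w, κ s w A ∂(κ t y))
    (y₀ : E) (f : E → E → E) (finv : E → E → E)
    (hf_cont : Continuous fun p : E × E => f p.1 p.2)
    (hfinv_cont : Continuous fun p : E × E => finv p.1 p.2)
    (hleft : ∀ y x : E, finv y (f y x) = x)
    (hright : ∀ y x : E, f y (finv y x) = x)
    (hf_y₀ : ∀ y : E, f y y₀ = y)
    (c : E → ℝ) (hc_cont : Continuous c) (hc_pos : ∀ y : E, 0 < c y)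
    (hss : ∀ y : E, ∀ t : ℝ, 0 ≤ t →
      κ t y = Measure.map (f y) (κ (c y * t) y₀))
    (hweak : ∀ g : BoundedContinuousFunction E ℝ,
      ContinuousOn (fun t : ℝ => ∫ x, g x ∂(κ t y₀)) (Set.Ici (0 : ℝ)))
    (hy : ∃ y : E, y ∈ interior
      {z : E | ∀ ε > (0 : ℝ), ∃ t : ℝ, 0 ≤ t ∧ 0 < κ t y (Metric.ball z ε)}) :
    {z : E | ∀ ε > (0 : ℝ), ∃ t : ℝ, 0 ≤ t ∧ 0 < κ t y₀ (Metric.ball z ε)} = Set.univ := by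
  obtain ⟨y, hy⟩ := hy
  have hf : ∀ w, Continuous (f w) := fun w => hf_cont.comp (Continuous.prodMk_right w)
  have hfinv : ∀ w, Continuous (finv w) := fun w => hfinv_cont.comp (Continuous.prodMk_right w)
  have hy₀ : y₀ ∈ interior (marginalSupport (κ · y₀)) := by
    refine interior_mono ?_ (mem_interior_iff_mem_nhds.mpr <|
      (hf y).continuousAt.preimage_mem_nhds (by rw [hf_y₀]; exact isOpen_interior.mem_nhds hy))
    intro x hx
    simpa only [hleft] using mapsTo_marginalSupport_of_eq_map (hc_pos y).le (hf y).measurable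
      (hfinv y) (hleft y) (hss y) (interior_subset hx)
  have hopen : IsOpen (marginalSupport (κ · y₀)) :=
    isOpen_of_mem_interior_of_forall_mem hfinv hright
      (fun z => by simpa only [hf_y₀] using hleft z y₀) hy₀
      fun z hz u hu => map_mem_marginalSupport hCK hf_cont hc_cont hc_pos hss hweak hz hu
  exact IsClopen.eq_univ ⟨isClosed_marginalSupport _, hopen⟩ ⟨y₀, interior_subset hy₀⟩
end

section
/- Let M > 0, n ≥ 1, and let a₁, …, aₙ ∈ ℝ² satisfy |π₁(aᵢ)| ≤ 2M and |π₂(aᵢ)| ≤ 2M e^M for every 1 ≤ i ≤ n. Then the T-product Pₙ := a₁ T a₂ T ⋯ T aₙ satisfies |π₁(Pₙ)| ≤ 2nM and |π₂(Pₙ)| ≤ 2nM e^{2nM}. -/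
/-!
The second coordinate of `y T z` is `y₂ + e^{y₁} z₂`, so along the product the first coordinates
add up, while the `k`-th factor contributes at most `e^{(k-1)α} β` to the second coordinate when
every factor has `|π₁| ≤ α` and `|π₂| ≤ β`. Hence `|π₂(Pₙ)| ≤ n β e^{(n-1)α}`, and with
`α = 2M`, `β = 2M e^M` this is `2nM e^{(2n-1)M} ≤ 2nM e^{2nM}`.
-/

open Real

namespace AffineGroup

/-- The group law `T` of the affine group `ℝ ⋉ ℝ`. -/
noncomputable def mul (y z : ℝ × ℝ) : ℝ × ℝ := (y.1 + z.1, y.2 + exp y.1 * z.2)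

theorem abs_snd_mul_le (y z : ℝ × ℝ) : |(mul y z).2| ≤ |y.2| + exp y.1 * |z.2| :=
  calc |y.2 + exp y.1 * z.2| ≤ |y.2| + |exp y.1 * z.2| := abs_add_le _ _
    _ = |y.2| + exp y.1 * |z.2| := by rw [abs_mul, abs_of_pos (exp_pos _)]

theorem abs_foldl_mul_le (α β : ℝ) (l : List (ℝ × ℝ))
    (hl : ∀ z ∈ l, |z.1| ≤ α ∧ |z.2| ≤ β) :
    |(l.foldl mul (0, 0)).1| ≤ l.length * α ∧
      |(l.foldl mul (0, 0)).2| ≤ l.length * β * exp ((l.length - 1) * α) := by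
  induction l using List.reverseRecOn with
  | nil => simp
  | append_singleton l x ih =>
    obtain ⟨ih₁, ih₂⟩ := ih fun z hz => hl z (List.mem_append_left _ hz)
    obtain ⟨hx₁, hx₂⟩ := hl x (by simp)
    set Q := l.foldl mul (0, 0)
    have hα : 0 ≤ α := (abs_nonneg _).trans hx₁
    have hβ : 0 ≤ β := (abs_nonneg _).trans hx₂
    have hexp : exp Q.1 ≤ exp (l.length * α) := exp_le_exp.2 ((le_abs_self _).trans ih₁)
    have hmono : exp ((l.length - 1) * α) ≤ exp (l.length * α) := exp_le_exp.2 (by nlinarith)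
    simp only [List.foldl_concat, List.length_append, List.length_singleton, Nat.cast_add,
      Nat.cast_one, add_sub_cancel_right]
    constructor
    · calc |Q.1 + x.1| ≤ |Q.1| + |x.1| := abs_add_le _ _
        _ ≤ (l.length + 1) * α := by linarith
    · calc |(mul Q x).2| ≤ |Q.2| + exp Q.1 * |x.2| := abs_snd_mul_le Q x
        _ ≤ l.length * β * exp (l.length * α) + exp (l.length * α) * β := by
          gcongr
          exact ih₂.trans (by gcongr)
        _ = (l.length + 1) * β * exp (l.length * α) := by ring

end AffineGroup

theorem stmt_16_general
    (M : ℝ) (hM : 0 < M) (n : ℕ) (a : Fin n → ℝ × ℝ)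
    (ha : ∀ i : Fin n, |(a i).1| ≤ 2 * M ∧ |(a i).2| ≤ 2 * M * Real.exp M) :
    let P : ℝ × ℝ := (List.ofFn a).foldl
      (fun y z : ℝ × ℝ => (y.1 + z.1, y.2 + Real.exp y.1 * z.2)) ((0 : ℝ), (0 : ℝ))
    |P.1| ≤ 2 * n * M ∧ |P.2| ≤ 2 * n * M * Real.exp (2 * n * M) := by
  intro P
  obtain ⟨h₁, h₂⟩ := AffineGroup.abs_foldl_mul_le (2 * M) (2 * M * exp M) (List.ofFn a) <| by
    intro z hz
    obtain ⟨i, rfl⟩ := List.mem_ofFn.1 hz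
    exact ha i
  rw [List.length_ofFn] at h₁ h₂
  change |(List.ofFn a |>.foldl AffineGroup.mul (0, 0)).1| ≤ _ ∧
    |(List.ofFn a |>.foldl AffineGroup.mul (0, 0)).2| ≤ _
  refine ⟨by linarith, h₂.trans ?_⟩
  calc n * (2 * M * exp M) * exp ((n - 1) * (2 * M))
      = 2 * n * M * exp ((2 * n - 1) * M) := by
        rw [show (2 * n - 1) * M = M + (n - 1) * (2 * M) by ring, exp_add]; ring
    _ ≤ 2 * n * M * exp (2 * n * M) := by gcongr; linarith

/-- if `a₁, …, aₙ ∈ ℝ²` satisfy `|π₁(aᵢ)| ≤ 2M` and `|π₂(aᵢ)| ≤ 2M e^M`, then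
their `T`-product `Pₙ = a₁ T a₂ T ⋯ T aₙ` satisfies `|π₁(Pₙ)| ≤ 2nM` and
`|π₂(Pₙ)| ≤ 2nM e^{2nM}`. -/
theorem stmt_16
    (M : ℝ) (hM : 0 < M) (n : ℕ) (hn : 1 ≤ n) (a : Fin n → ℝ × ℝ)
    (ha : ∀ i : Fin n, |(a i).1| ≤ 2 * M ∧ |(a i).2| ≤ 2 * M * Real.exp M) :
    let P : ℝ × ℝ := (List.ofFn a).foldl
      (fun y z : ℝ × ℝ => (y.1 + z.1, y.2 + Real.exp y.1 * z.2)) ((0 : ℝ), (0 : ℝ))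
    |P.1| ≤ 2 * n * M ∧ |P.2| ≤ 2 * n * M * Real.exp (2 * n * M) :=
  stmt_16_general M hM n a ha
end

section
/- The function ϕ is a continuous, strictly increasing bijection from [0, ζ) onto [0, T), where T := sup_{t < ζ} ϕ(t) ∈ (0, ∞], and its inverse ϕ⁻¹ : [0, T) → [0, ζ) satisfies, for every t ∈ [0, T), the identity ϕ⁻¹(t) = ∫₀ᵗ (c(X(ϕ⁻¹(v))))⁻¹ dv. -/
/-!
On each `[0, b] ⊆ [0, ζ)` the function `t ↦ c (X t)` is càdlàg, hence measurable (it is the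
pointwise limit of its values at the grid points `⌈t (n + 1)⌉ / (n + 1)` just right of `t`) and
bounded, so integrable. Hence `ϕ` is a continuous primitive of a positive function and, by the
intermediate value theorem, a strictly increasing bijection of `[0, ζ)` onto `[0, T)`; its inverse
`ψ`, an increasing bijection between intervals, is continuous. Right-continuity of `X` makes
`c (X t)` the right derivative of `ϕ` at `t`, so `ψ` has right derivative `(c (X (ψ v)))⁻¹ ≥ 0`.
A nonnegative right derivative is automatically integrable, and the fundamental theorem of
calculus for right derivatives gives the formula for `ψ`.
-/

open MeasureTheory intervalIntegral Set Filter Topology TopologicalSpace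
open scoped ENNReal

theorem tendsto_ceil_mul_div_nhdsGE (x : ℝ) :
    Tendsto (fun n : ℕ => ⌈x * (n + 1)⌉ / ((n : ℝ) + 1)) atTop (𝓝[≥] x) := by
  have hpos (n : ℕ) : (0 : ℝ) < n + 1 := by positivity
  have hle (n : ℕ) : x ≤ ⌈x * (n + 1)⌉ / ((n : ℝ) + 1) :=
    (le_div_iff₀ (hpos n)).2 (Int.le_ceil _)
  have hge (n : ℕ) : ⌈x * (n + 1)⌉ / ((n : ℝ) + 1) ≤ x + 1 / ((n : ℝ) + 1) := by
    rw [div_le_iff₀ (hpos n), add_mul, one_div_mul_cancel (hpos n).ne']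
    exact (Int.ceil_lt_add_one _).le
  have hupper : Tendsto (fun n : ℕ => x + 1 / ((n : ℝ) + 1)) atTop (𝓝 x) := by
    simpa using (tendsto_const_nhds (x := x)).add tendsto_one_div_add_atTop_nhds_zero_nat
  exact tendsto_nhdsWithin_iff.2 ⟨tendsto_of_tendsto_of_tendsto_of_le_of_le tendsto_const_nhds
    hupper hle hge, Eventually.of_forall hle⟩

theorem measurable_of_continuousWithinAt_Ici {β : Type*} [TopologicalSpace β]
    [PseudoMetrizableSpace β] [MeasurableSpace β] [BorelSpace β] {f : ℝ → β}
    (hf : ∀ x, ContinuousWithinAt f (Ici x) x) : Measurable f := by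
  refine measurable_of_tendsto_metrizable
    (f := fun (n : ℕ) (x : ℝ) => f (⌈x * (n + 1)⌉ / ((n : ℝ) + 1))) (fun n => ?_)
    (tendsto_pi_nhds.2 fun x => (hf x).tendsto.comp (tendsto_ceil_mul_div_nhdsGE x))
  exact (measurable_of_countable fun k : ℤ => f (k / ((n : ℝ) + 1))).comp
    (Int.measurable_ceil.comp (measurable_id.mul_const _))

theorem locallyIntegrable_of_cadlag {E : Type*}
    [NormedAddCommGroup E] [MeasurableSpace E] [BorelSpace E] [SecondCountableTopology E]
    {f : ℝ → E} (hr : ∀ x, ContinuousWithinAt f (Ici x) x)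
    (hl : ∀ x, ∃ l, Tendsto f (𝓝[<] x) (𝓝 l)) : LocallyIntegrable f := by
  have hm := (measurable_of_continuousWithinAt_Ici hr).aestronglyMeasurable (μ := volume)
  intro x
  obtain ⟨l, hl⟩ := hl x
  rw [← nhdsLT_sup_nhdsGE, IntegrableAtFilter.sup_iff]
  exact ⟨hl.integrableAtFilter hm.stronglyMeasurableAtFilter (Measure.finiteAt_nhdsWithin _ _ _),
    (hr x).tendsto.integrableAtFilter hm.stronglyMeasurableAtFilter
      (Measure.finiteAt_nhdsWithin _ _ _)⟩

section IccExtend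

variable {α : Type*} [TopologicalSpace α] {f : ℝ → α} {a b : ℝ}

theorem continuousWithinAt_Ici_IccExtend (hab : a ≤ b)
    (hf : ∀ x ∈ Icc a b, ContinuousWithinAt f (Ici x) x) (x : ℝ) :
    ContinuousWithinAt (IccExtend hab (fun x : Icc a b => f x)) (Ici x) x :=
  (hf _ (projIcc a b hab x).2).comp (f := fun y => (projIcc a b hab y : ℝ))
    (continuous_subtype_val.comp continuous_projIcc).continuousWithinAt
    fun _ hy => Subtype.coe_le_coe.2 (monotone_projIcc hab hy)

theorem exists_tendsto_nhdsLT_IccExtend (hab : a ≤ b)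
    (hf : ∀ x ∈ Ioc a b, ∃ l, Tendsto f (𝓝[<] x) (𝓝 l)) (x : ℝ) :
    ∃ l, Tendsto (IccExtend hab (fun x : Icc a b => f x)) (𝓝[<] x) (𝓝 l) := by
  rcases le_or_gt x a with hxa | hax
  · refine ⟨f a, tendsto_const_nhds.congr' ?_⟩
    filter_upwards [self_mem_nhdsWithin] with y hy
    exact (IccExtend_of_le_left hab (fun x : Icc a b => f x) (hy.out.trans_le hxa).le).symm
  rcases le_or_gt x b with hxb | hbx
  · obtain ⟨l, hl⟩ := hf x ⟨hax, hxb⟩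
    refine ⟨l, hl.congr' ?_⟩
    filter_upwards [Ioo_mem_nhdsLT hax] with y hy
    exact (IccExtend_of_mem hab (fun x : Icc a b => f x)
      ⟨hy.1.le, hy.2.le.trans hxb⟩).symm
  · refine ⟨f b, tendsto_const_nhds.congr' ?_⟩
    filter_upwards [Ioo_mem_nhdsLT hbx] with y hy
    exact (IccExtend_of_right_le hab (fun x : Icc a b => f x) hy.1.le).symm

end IccExtend

theorem integrableOn_Icc_of_cadlag {E : Type*}
    [NormedAddCommGroup E] [MeasurableSpace E] [BorelSpace E] [SecondCountableTopology E]
    {f : ℝ → E} {a b : ℝ} (hr : ∀ x ∈ Icc a b, ContinuousWithinAt f (Ici x) x)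
    (hl : ∀ x ∈ Ioc a b, ∃ l, Tendsto f (𝓝[<] x) (𝓝 l)) : IntegrableOn f (Icc a b) := by
  rcases le_or_gt a b with hab | hba
  · exact ((locallyIntegrable_of_cadlag (continuousWithinAt_Ici_IccExtend hab hr)
      (exists_tendsto_nhdsLT_IccExtend hab hl)).integrableOn_isCompact isCompact_Icc).congr_fun
      (fun _ hx => IccExtend_of_mem hab _ hx) measurableSet_Icc
  · simp [Icc_eq_empty_of_lt hba]

theorem strictMonoOn_primitive_Icc {f : ℝ → ℝ} {a b : ℝ} (hint : IntegrableOn f (Icc a b))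
    (hpos : ∀ x ∈ Icc a b, 0 < f x) : StrictMonoOn (fun t => ∫ u in a..t, f u) (Icc a b) := by
  intro x hx y hy hxy
  have hii {p q : ℝ} (hp : p ∈ Icc a b) (hq : q ∈ Icc a b) : IntervalIntegrable f volume p q :=
    (hint.mono_set (uIcc_subset_Icc hp hq)).intervalIntegrable
  have ha : a ∈ Icc a b := left_mem_Icc.2 (hx.1.trans hx.2)
  have hpos_xy : 0 < ∫ u in x..y, f u := intervalIntegral_pos_of_pos_on (hii hx hy)
    (fun u hu => hpos u ⟨hx.1.trans hu.1.le, hu.2.le.trans hy.2⟩) hxy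
  rw [← integral_interval_sub_left (hii ha hy) (hii ha hx)] at hpos_xy
  exact sub_pos.1 hpos_xy

theorem hasDerivWithinAt_Ici_primitive {E : Type*} [NormedAddCommGroup E] [NormedSpace ℝ E]
    [CompleteSpace E] {f : ℝ → E} {a b t : ℝ} (hint : IntegrableOn f (Icc a b))
    (ht : t ∈ Ico a b) (hf : ContinuousWithinAt f (Ici t) t) :
    HasDerivWithinAt (fun u => ∫ x in a..u, f x) (f t) (Ici t) t :=
  integral_hasDerivWithinAt_right
    (hint.mono_set (uIcc_subset_Icc (left_mem_Icc.2 (ht.1.trans ht.2.le))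
      (Ico_subset_Icc_self ht))).intervalIntegrable
    ⟨Icc a b, Icc_mem_nhdsGT_of_mem ht, hint.aestronglyMeasurable⟩ (hf.mono Ioi_subset_Ici_self)

theorem integral_eq_sub_of_hasDeriv_right_of_nonneg {g g' : ℝ → ℝ} {a b : ℝ} (hab : a ≤ b)
    (hcont : ContinuousOn g (Icc a b))
    (hderiv : ∀ x ∈ Ioo a b, HasDerivWithinAt g (g' x) (Ioi x) x)
    (hpos : ∀ x ∈ Ioo a b, 0 ≤ g' x) : ∫ x in a..b, g' x = g b - g a :=
  integral_eq_sub_of_hasDeriv_right_of_le hab hcont hderiv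
    ((intervalIntegrable_iff_integrableOn_Ioc_of_le hab).2
      (integrableOn_deriv_right_of_nonneg hcont hderiv hpos))

theorem StrictMonoOn.continuousOn_of_ordConnected {α β : Type*} [LinearOrder α]
    [TopologicalSpace α] [OrderTopology α] [LinearOrder β] [TopologicalSpace β] [OrderTopology β]
    {f : α → β} {s : Set α} (hs : s.OrdConnected) (hf : StrictMonoOn f s)
    (hfs : (f '' s).OrdConnected) : ContinuousOn f s :=
  haveI := hs
  continuousOn_iff_continuous_domRestrict.2
    ((strictMonoOn_iff_strictMono.1 hf).isEmbedding_of_ordConnected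
      (by rwa [← image_eq_range])).continuous

theorem StrictMonoOn.strictMonoOn_of_rightInvOn {α β : Type*} [LinearOrder α] [Preorder β]
    {f : α → β} {g : β → α} {s : Set α} {t : Set β} (hf : StrictMonoOn f s) (hg : MapsTo g t s)
    (hfg : RightInvOn g f t) : StrictMonoOn g t :=
  fun x hx y hy hxy => (hf.lt_iff_lt (hg hx) (hg hy)).1 (by rwa [hfg hx, hfg hy])

theorem HasDerivWithinAt.of_local_left_inverse {𝕜 : Type*} [NontriviallyNormedField 𝕜]
    {f g : 𝕜 → 𝕜} {f' a : 𝕜} {s t : Set 𝕜} (hg : Tendsto g (𝓝[s] a) (𝓝[t] (g a)))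
    (hf : HasDerivWithinAt f f' t (g a)) (hf' : f' ≠ 0) (ha : a ∈ s)
    (hfg : ∀ᶠ y in 𝓝[s] a, f (g y) = y) : HasDerivWithinAt g f'⁻¹ s a :=
  HasFDerivWithinAt.of_local_left_inverse
    (f' := ContinuousLinearEquiv.unitsEquivAut 𝕜 (Units.mk0 f' hf')) hg hf ha hfg

theorem HasDerivWithinAt.Ici_of_rightInvOn {f g : ℝ → ℝ} {f' a : ℝ} {s : Set ℝ}
    (hf : HasDerivWithinAt f f' (Ici (g a)) (g a)) (hf' : f' ≠ 0) (hs : s ∈ 𝓝[≥] a)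
    (hmono : MonotoneOn g s) (hcont : ContinuousWithinAt g s a) (hfg : RightInvOn g f s) :
    HasDerivWithinAt g f'⁻¹ (Ici a) a := by
  have ha : a ∈ s := mem_of_mem_nhdsWithin self_mem_Ici hs
  refine hf.of_local_left_inverse ?_ hf' self_mem_Ici (mem_of_superset hs hfg)
  exact tendsto_nhdsWithin_iff.2 ⟨hcont.mono_of_mem_nhdsWithin hs,
    mem_of_superset (inter_mem hs self_mem_nhdsWithin) fun y hy => hmono ha hy.1 hy.2⟩

/-- The sets `J` and `J'` of `stmt_17` are `realIco ζ` and `realIco T`. -/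
def realIco (ζ : ℝ≥0∞) : Set ℝ := {t | 0 ≤ t ∧ ENNReal.ofReal t < ζ}

namespace realIco

variable {ζ : ℝ≥0∞} {t b : ℝ}

theorem zero_mem (hζ : 0 < ζ) : (0 : ℝ) ∈ realIco ζ := ⟨le_rfl, by simpa using hζ⟩

theorem Icc_subset (hb : b ∈ realIco ζ) : Icc 0 b ⊆ realIco ζ :=
  fun _ ht => ⟨ht.1, (ENNReal.ofReal_le_ofReal ht.2).trans_lt hb.2⟩

theorem ordConnected : (realIco ζ).OrdConnected :=
  ⟨fun _ hx _ hy _ hz => Icc_subset hy ⟨hx.1.trans hz.1, hz.2⟩⟩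

theorem exists_gt (ht : t ∈ realIco ζ) : ∃ b ∈ realIco ζ, t < b := by
  obtain ⟨b, hbζ, htb⟩ := (((ENNReal.continuous_ofReal.continuousAt.eventually_lt
    continuousAt_const ht.2).filter_mono nhdsWithin_le_nhds).and
    (self_mem_nhdsWithin (s := Ioi t))).exists
  exact ⟨b, ⟨ht.1.trans htb.le, hbζ⟩, htb⟩

theorem mem_nhdsGE (ht : t ∈ realIco ζ) : realIco ζ ∈ 𝓝[≥] t := by
  obtain ⟨b, hb, htb⟩ := exists_gt ht
  exact mem_of_superset (Ico_mem_nhdsGE htb) fun x hx => Icc_subset hb ⟨ht.1.trans hx.1, hx.2.le⟩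

theorem continuousOn_of_Icc {α : Type*} [TopologicalSpace α] {g : ℝ → α}
    (h : ∀ b ∈ realIco ζ, ContinuousOn g (Icc 0 b)) : ContinuousOn g (realIco ζ) := by
  intro t ht
  obtain ⟨b, hb, htb⟩ := exists_gt ht
  exact (h b hb t ⟨ht.1, htb.le⟩).mono_of_mem_nhdsWithin
    (mem_of_superset (inter_mem_nhdsWithin _ (Iio_mem_nhds htb)) fun x hx => ⟨hx.1.1, hx.2.le⟩)

theorem strictMonoOn_of_Icc {β : Type*} [Preorder β] {g : ℝ → β}
    (h : ∀ b ∈ realIco ζ, StrictMonoOn g (Icc 0 b)) : StrictMonoOn g (realIco ζ) :=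
  fun _ hx y hy hxy => h y hy ⟨hx.1, hxy.le⟩ ⟨hy.1, le_rfl⟩ hxy

theorem bijOn_iSup {g : ℝ → ℝ} (hcont : ContinuousOn g (realIco ζ))
    (hmono : StrictMonoOn g (realIco ζ)) (h0 : g 0 = 0) :
    BijOn g (realIco ζ) (realIco (⨆ t ∈ realIco ζ, ENNReal.ofReal (g t))) := by
  refine ⟨fun t ht => ?_, hmono.injOn, fun s hs => ?_⟩
  · obtain ⟨b, hb, htb⟩ := exists_gt ht
    have hgt : 0 ≤ g t := h0 ▸ hmono.monotoneOn (Icc_subset ht ⟨le_rfl, ht.1⟩) ht ht.1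
    have hgb : g t < g b := hmono ht hb htb
    exact ⟨hgt, ((ENNReal.ofReal_lt_ofReal_iff (hgt.trans_lt hgb)).2 hgb).trans_le
      (le_biSup (fun t => ENNReal.ofReal (g t)) hb)⟩
  · obtain ⟨t, ht, hst⟩ := lt_biSup_iff.1 hs.2
    obtain ⟨x, hx, hxs⟩ := intermediate_value_Icc ht.1 (hcont.mono (Icc_subset ht))
      ⟨h0.symm ▸ hs.1, (ENNReal.ofReal_lt_ofReal_iff'.1 hst).1.le⟩
    exact ⟨x, Icc_subset ht hx, hxs⟩

end realIco

/-- for a càdlàg path `X : [0, ζ) → E` and a continuous positive function `c`,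
the additive functional `ϕ(t) = ∫₀ᵗ c(X(u)) du` is a continuous strictly increasing bijection
from `[0, ζ)` onto `[0, T)` with `T = sup_{t < ζ} ϕ(t) ∈ (0, ∞]`, and its inverse `ψ = ϕ⁻¹`
satisfies `ψ(t) = ∫₀ᵗ (c(X(ψ(v))))⁻¹ dv` on `[0, T)`. -/
theorem stmt_17
    {E : Type*} [TopologicalSpace E]
    (c : E → ℝ) (hc_cont : Continuous c) (hc_pos : ∀ x : E, 0 < c x)
    (ζ : ℝ≥0∞) (hζ : 0 < ζ)
    (X : ℝ → E)
    (hX_rc : ∀ t : ℝ, 0 ≤ t → ENNReal.ofReal t < ζ →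
      ContinuousWithinAt X (Set.Ici t) t)
    (hX_ll : ∀ t : ℝ, 0 < t → ENNReal.ofReal t < ζ →
      ∃ l : E, Filter.Tendsto X (nhdsWithin t (Set.Iio t)) (nhds l)) :
    let J : Set ℝ := {t : ℝ | 0 ≤ t ∧ ENNReal.ofReal t < ζ}
    let ϕ : ℝ → ℝ := fun t => ∫ u in (0 : ℝ)..t, c (X u)
    let T : ℝ≥0∞ := ⨆ t ∈ J, ENNReal.ofReal (ϕ t)
    let J' : Set ℝ := {s : ℝ | 0 ≤ s ∧ ENNReal.ofReal s < T}
    0 < T ∧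
    ContinuousOn ϕ J ∧
    StrictMonoOn ϕ J ∧
    Set.BijOn ϕ J J' ∧
    ∃ ψ : ℝ → ℝ, Set.MapsTo ψ J' J ∧ Set.InvOn ψ ϕ J J' ∧
      ∀ s ∈ J', ψ s = ∫ v in (0 : ℝ)..s, (c (X (ψ v)))⁻¹ := by
  intro J ϕ T J'
  have hrc (t : ℝ) (ht : t ∈ J) : ContinuousWithinAt (fun u => c (X u)) (Ici t) t :=
    hc_cont.continuousAt.comp_continuousWithinAt (hX_rc t ht.1 ht.2)
  have hint (b : ℝ) (hb : b ∈ J) : IntegrableOn (fun u => c (X u)) (Icc 0 b) :=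
    integrableOn_Icc_of_cadlag (fun t ht => hrc t (realIco.Icc_subset hb ht)) fun t ht =>
      let ⟨l, hl⟩ := hX_ll t ht.1 (realIco.Icc_subset hb (Ioc_subset_Icc_self ht)).2
      ⟨c l, (hc_cont.tendsto l).comp hl⟩
  have hcont : ContinuousOn ϕ J := realIco.continuousOn_of_Icc fun b hb => by
    have h := hint b hb
    rw [← uIcc_of_le hb.1] at h ⊢
    exact continuousOn_primitive_interval h
  have hmono : StrictMonoOn ϕ J := realIco.strictMonoOn_of_Icc fun b hb =>
    strictMonoOn_primitive_Icc (hint b hb) fun u _ => hc_pos (X u)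
  have hbij : BijOn ϕ J J' := realIco.bijOn_iSup hcont hmono integral_same
  have hT : 0 < T := by simpa [ϕ] using (hbij.mapsTo (realIco.zero_mem hζ)).2
  set ψ := Function.invFunOn ϕ J
  have hinv : InvOn ψ ϕ J J' := hbij.invOn_invFunOn
  have hψ : BijOn ψ J' J := hbij.symm hinv.symm
  have hψmono : StrictMonoOn ψ J' := hmono.strictMonoOn_of_rightInvOn hψ.mapsTo hinv.2
  have hψcont : ContinuousOn ψ J' := hψmono.continuousOn_of_ordConnected realIco.ordConnected
    (hψ.image_eq ▸ realIco.ordConnected)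
  have hψ' (v : ℝ) (hv : v ∈ J') : HasDerivWithinAt ψ (c (X (ψ v)))⁻¹ (Ici v) v := by
    obtain ⟨b, hb, hψb⟩ := realIco.exists_gt (hψ.mapsTo hv)
    exact (hasDerivWithinAt_Ici_primitive (hint b hb) ⟨(hψ.mapsTo hv).1, hψb⟩
      (hrc _ (hψ.mapsTo hv))).Ici_of_rightInvOn (hc_pos _).ne' (realIco.mem_nhdsGE hv)
      hψmono.monotoneOn (hψcont v hv) hinv.2
  refine ⟨hT, hcont, hmono, hbij, ψ, hψ.mapsTo, hinv, fun s hs => ?_⟩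
  have hψ0 : ψ 0 = 0 := by simpa [ϕ] using hinv.1 (realIco.zero_mem hζ)
  rw [integral_eq_sub_of_hasDeriv_right_of_nonneg hs.1 (hψcont.mono (realIco.Icc_subset hs))
    (fun v hv => (hψ' v (realIco.Icc_subset hs (Ioo_subset_Icc_self hv))).mono
      Ioi_subset_Ici_self)
    (fun v _ => (inv_pos.2 (hc_pos _)).le), hψ0, sub_zero]
end
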